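/- arXiv:2402.01323 — 6 statements merged into one kernel-verified Lean document; each statement's English description precedes it below -/
import Mathlib

section
/- Let b > 0 and let α : [0,b] → ℝ be differentiable with 0 < α(t) < 1 on [0,b] and |α'(t)| ≤ L for all t ∈ [0,b]. Set k(t) = t^{−α(t)}, κ = Γ(α(0))·Γ(1−α(0)) and K(t) = t^{α(0)−1}/κ. Then K ∈ L¹(0,b), and the function g(t) = ∫₀ᵗ K(t−s) k(s) ds is differentiable on (0,b) with g' ∈ L¹(0,b) and g(0) = 1; that is, k satisfies the generalized Sonine condition with associated kernel K. -/
/-!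
Write `c = α 0` and `k s = s ^ (-c) * φ s` with `φ s = s ^ (c - α s)` (`expRatio α`). Since
`|α s - c| ≤ L s`, the exponent `(c - α s) log s` is bounded by `L s |log s|`, so `φ` is
bounded on `(0, b)`, tends to `1` at `0`, and `|φ' s| ≲ 1 + |log s|`. The substitution `s = t u`
gives `g t = κ⁻¹ ∫₀¹ u^(-c) (1-u)^(c-1) φ (t u) du`, and the Beta integral of this weight is `κ`.
Dominated convergence then yields `g(0⁺) = 1`, and differentiating under the integral sign gives
`|g' t| ≲ 2 + |log t|`, which is integrable on `(0, b)`.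
-/

open MeasureTheory Set Filter intervalIntegral
open scoped Topology

lemma intervalIntegrable_rpow_mul_one_sub_rpow {p q : ℝ} (hp : -1 < p) (hq : -1 < q) :
    IntervalIntegrable (fun u : ℝ => u ^ p * (1 - u) ^ q) volume 0 1 := by
  have hleft : IntervalIntegrable (fun u : ℝ => u ^ p * (1 - u) ^ q) volume 0 (1 / 2) := by
    refine (intervalIntegrable_rpow' hp).mul_continuousOn
      (ContinuousOn.rpow_const (by fun_prop) fun u hu => Or.inl ?_)
    rw [uIcc_of_le (by norm_num)] at hu
    linarith [hu.2]
  have hright : IntervalIntegrable (fun u : ℝ => u ^ p * (1 - u) ^ q) volume (1 / 2) 1 := by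
    have h := (intervalIntegrable_rpow' (a := 0) (b := 1 / 2) hq).comp_sub_left 1
    norm_num at h
    refine h.symm.continuousOn_mul
      (ContinuousOn.rpow_const continuousOn_id fun u hu => Or.inl ?_)
    rw [uIcc_of_le (by norm_num)] at hu
    exact (lt_of_lt_of_le (by norm_num) hu.1).ne'
  exact hleft.trans hright

lemma integral_rpow_neg_mul_one_sub_rpow {c : ℝ} (hc0 : 0 < c) (hc1 : c < 1) :
    ∫ u in (0:ℝ)..1, u ^ (-c) * (1 - u) ^ (c - 1) = Real.Gamma c * Real.Gamma (1 - c) := by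
  have h := Complex.Gamma_mul_Gamma_eq_betaIntegral (s := (1 - c : ℝ)) (t := (c : ℝ))
    (by simp; linarith) (by simpa using hc0)
  rw [show ((1 - c : ℝ) : ℂ) + (c : ℝ) = 1 by push_cast; ring, Complex.Gamma_one, one_mul,
    Complex.Gamma_ofReal, Complex.Gamma_ofReal, ← Complex.ofReal_mul, Complex.betaIntegral] at h
  apply Complex.ofReal_injective
  rw [← intervalIntegral.integral_ofReal, mul_comm, h]
  refine integral_congr fun u hu => ?_
  rw [uIcc_of_le zero_le_one] at hu
  push_cast
  rw [Complex.ofReal_cpow hu.1, Complex.ofReal_cpow (by linarith [hu.2])]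
  push_cast
  ring_nf

lemma rpow_sub_mul_rpow_neg_mul_eq {t u : ℝ} (ht : 0 < t) (hu : u ∈ Ioo (0:ℝ) 1) (c a : ℝ) :
    t * ((t - t * u) ^ (c - 1) * (t * u) ^ (-a))
      = u ^ (-c) * (1 - u) ^ (c - 1) * (t * u) ^ (c - a) := by
  have htu : 0 < t * u := mul_pos ht hu.1
  have ht_pow : t * (t ^ (c - 1) * t ^ (-c)) = 1 := by
    rw [← Real.rpow_add ht, show c - 1 + -c = -1 by ring, Real.rpow_neg_one,
      mul_inv_cancel₀ ht.ne']
  rw [show t - t * u = t * (1 - u) by ring, Real.mul_rpow ht.le (by linarith [hu.2]),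
    show -a = -c + (c - a) by ring, Real.rpow_add htu, Real.mul_rpow ht.le hu.1.le]
  linear_combination ((1 - u) ^ (c - 1) * u ^ (-c) * (t * u) ^ (c - a)) * ht_pow

lemma integral_rpow_sub_mul_rpow_neg_eq (c : ℝ) (β : ℝ → ℝ) {t : ℝ} (ht : 0 < t) :
    ∫ s in (0:ℝ)..t, (t - s) ^ (c - 1) * s ^ (-β s)
      = ∫ u in (0:ℝ)..1, u ^ (-c) * (1 - u) ^ (c - 1) * (t * u) ^ (c - β (t * u)) := by
  have h := integral_comp_mul_left (fun s => (t - s) ^ (c - 1) * s ^ (-β s)) ht.ne'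
    (a := 0) (b := 1)
  rw [mul_zero, mul_one, smul_eq_mul, eq_inv_mul_iff_mul_eq₀ ht.ne'] at h
  rw [← h, ← intervalIntegral.integral_const_mul]
  refine integral_congr_ae ?_
  filter_upwards [volume.ae_ne 1] with u hu1 hu
  rw [uIoc_of_le zero_le_one] at hu
  exact rpow_sub_mul_rpow_neg_mul_eq ht ⟨hu.1, lt_of_le_of_ne hu.2 hu1⟩ c (β (t * u))

section Rescaling

variable {w φ : ℝ → ℝ} {b : ℝ}

lemma mul_mem_Ioo_of_mem_Ioc {x u : ℝ} (hx : x ∈ Ioo 0 b) (hu : u ∈ Ioc (0:ℝ) 1) :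
    x * u ∈ Ioo 0 b :=
  ⟨mul_pos hx.1 hu.1, (mul_le_of_le_one_right hx.1.le hu.2).trans_lt hx.2⟩

lemma aestronglyMeasurable_mul_comp_mul (hw : IntervalIntegrable w volume 0 1)
    (hφ : ContinuousOn φ (Ioo 0 b)) {x : ℝ} (hx : x ∈ Ioo 0 b) :
    AEStronglyMeasurable (fun u => w u * φ (x * u)) (volume.restrict (uIoc 0 1)) := by
  refine hw.def'.aestronglyMeasurable.mul ?_
  rw [uIoc_of_le zero_le_one]
  exact (hφ.comp (continuousOn_const.mul continuousOn_id) fun u hu =>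
    mul_mem_Ioo_of_mem_Ioc hx hu).aestronglyMeasurable measurableSet_Ioc

lemma abs_mul_comp_mul_le {M : ℝ} (hM : ∀ s ∈ Ioo 0 b, |φ s| ≤ M) {x u : ℝ}
    (hx : x ∈ Ioo 0 b) (hu : u ∈ Ioc (0:ℝ) 1) : |w u * φ (x * u)| ≤ |w u| * M := by
  rw [abs_mul]
  exact mul_le_mul_of_nonneg_left (hM _ (mul_mem_Ioo_of_mem_Ioc hx hu)) (abs_nonneg _)

lemma intervalIntegrable_mul_comp_mul (hw : IntervalIntegrable w volume 0 1)
    (hφ : ContinuousOn φ (Ioo 0 b)) {M : ℝ} (hM : ∀ s ∈ Ioo 0 b, |φ s| ≤ M)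
    {x : ℝ} (hx : x ∈ Ioo 0 b) :
    IntervalIntegrable (fun u => w u * φ (x * u)) volume 0 1 := by
  rw [intervalIntegrable_iff]
  refine (hw.def'.abs.mul_const M).mono' (aestronglyMeasurable_mul_comp_mul hw hφ hx) ?_
  rw [uIoc_of_le zero_le_one]
  filter_upwards [ae_restrict_mem measurableSet_Ioc] with u hu
  exact abs_mul_comp_mul_le hM hx hu

lemma tendsto_integral_mul_comp_mul_nhdsGT_zero (hw : IntervalIntegrable w volume 0 1)
    (hφ : ContinuousOn φ (Ioo 0 b)) {M : ℝ} (hM : ∀ s ∈ Ioo 0 b, |φ s| ≤ M) {l : ℝ}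
    (hφl : Tendsto φ (𝓝[>] 0) (𝓝 l)) (hb : 0 < b) :
    Tendsto (fun x => ∫ u in (0:ℝ)..1, w u * φ (x * u)) (𝓝[>] 0)
      (𝓝 (∫ u in (0:ℝ)..1, w u * l)) := by
  have hIoo : Ioo 0 b ∈ 𝓝[>] (0:ℝ) := Ioo_mem_nhdsGT hb
  refine tendsto_integral_filter_of_dominated_convergence (fun u => |w u| * M)
    (Eventually.mono hIoo fun x hx => aestronglyMeasurable_mul_comp_mul hw hφ hx)
    (Eventually.mono hIoo fun x hx => ae_of_all _ fun u hu => ?_) (hw.abs.mul_const M)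
    (ae_of_all _ fun u hu => ?_)
  · rw [uIoc_of_le zero_le_one] at hu
    exact abs_mul_comp_mul_le hM hx hu
  · rw [uIoc_of_le zero_le_one] at hu
    refine (hφl.comp ?_).const_mul (w u)
    refine tendsto_nhdsWithin_of_tendsto_nhds_of_eventually_within _ ?_
      (eventually_nhdsWithin_of_forall fun x (hx : 0 < x) => mul_pos hx hu.1)
    exact ((continuous_mul_const u).tendsto' 0 0 (zero_mul u)).mono_left nhdsWithin_le_nhds

lemma abs_mul_deriv_comp_mul_le {C : ℝ}
    (hφ' : ∀ s ∈ Ioo 0 b, |deriv φ s| ≤ C * (1 + |Real.log s|)) {x u : ℝ} (hx : x ∈ Ioo 0 b)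
    (hu : u ∈ Ioc (0:ℝ) 1) :
    |u * deriv φ (x * u)| ≤ C * (2 + |Real.log x|) := by
  have hxu := hφ' _ (mul_mem_Ioo_of_mem_Ioc hx hu)
  have hC : 0 ≤ C := nonneg_of_mul_nonneg_left ((abs_nonneg _).trans hxu) (by positivity)
  -- `u * |log u| < 1` on `(0, 1]` absorbs the logarithmic singularity at `u = 0`.
  have hlog : u * |Real.log (x * u)| ≤ u * |Real.log x| + 1 := by
    rw [Real.log_mul hx.1.ne' hu.1.ne']
    have := Real.abs_log_mul_self_lt u hu.1 hu.2
    rw [abs_mul, abs_of_pos hu.1] at this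
    have := mul_le_mul_of_nonneg_left (abs_add_le (Real.log x) (Real.log u)) hu.1.le
    linarith
  rw [abs_mul, abs_of_pos hu.1]
  calc u * |deriv φ (x * u)| ≤ u * (C * (1 + |Real.log (x * u)|)) :=
        mul_le_mul_of_nonneg_left hxu hu.1.le
    _ = C * (u + u * |Real.log (x * u)|) := by ring
    _ ≤ C * (1 + (u * |Real.log x| + 1)) := by gcongr; exact hu.2
    _ ≤ C * (2 + |Real.log x|) := by
        have := mul_le_of_le_one_left (abs_nonneg (Real.log x)) hu.2
        exact mul_le_mul_of_nonneg_left (by linarith) hC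

lemma abs_integral_mul_mul_deriv_comp_mul_le (hw : IntervalIntegrable w volume 0 1) {C : ℝ}
    (hφ' : ∀ s ∈ Ioo 0 b, |deriv φ s| ≤ C * (1 + |Real.log s|)) {x : ℝ} (hx : x ∈ Ioo 0 b) :
    |∫ u in (0:ℝ)..1, w u * (u * deriv φ (x * u))|
      ≤ (∫ u in (0:ℝ)..1, |w u|) * (C * (2 + |Real.log x|)) := by
  rw [← intervalIntegral.integral_mul_const, ← Real.norm_eq_abs]
  refine norm_integral_le_of_norm_le zero_le_one (ae_of_all _ fun u hu => ?_)
    (hw.abs.mul_const _)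
  rw [Real.norm_eq_abs, abs_mul]
  exact mul_le_mul_of_nonneg_left (abs_mul_deriv_comp_mul_le hφ' hx hu) (abs_nonneg _)

lemma hasDerivAt_integral_mul_comp_mul (hw : IntervalIntegrable w volume 0 1)
    (hφ : DifferentiableOn ℝ φ (Ioo 0 b)) {M : ℝ} (hM : ∀ s ∈ Ioo 0 b, |φ s| ≤ M) {C : ℝ}
    (hφ' : ∀ s ∈ Ioo 0 b, |deriv φ s| ≤ C * (1 + |Real.log s|)) {t : ℝ} (ht : t ∈ Ioo 0 b) :
    HasDerivAt (fun x => ∫ u in (0:ℝ)..1, w u * φ (x * u))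
      (∫ u in (0:ℝ)..1, w u * (u * deriv φ (t * u))) t := by
  set B := C * (2 + |Real.log t|) + 1
  have hlog : ContinuousAt (fun x => C * (2 + |Real.log x|)) t := by
    fun_prop (disch := exact ht.1.ne')
  have hs : Ioo 0 b ∩ {x | C * (2 + |Real.log x|) < B} ∈ 𝓝 t :=
    inter_mem (isOpen_Ioo.mem_nhds ht) (hlog.eventually_lt continuousAt_const (lt_add_one _))
  refine (hasDerivAt_integral_of_dominated_loc_of_deriv_le (bound := fun u => |w u| * B)
    (F := fun x u => w u * φ (x * u)) (F' := fun x u => w u * (u * deriv φ (x * u))) hs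
    (Eventually.mono (isOpen_Ioo.mem_nhds ht) fun x hx =>
      aestronglyMeasurable_mul_comp_mul hw hφ.continuousOn hx)
    (intervalIntegrable_mul_comp_mul hw hφ.continuousOn hM ht)
    (hw.def'.aestronglyMeasurable.mul (measurable_id.mul
      ((measurable_deriv φ).comp (measurable_const_mul t))).aestronglyMeasurable)
    (ae_of_all _ fun u hu x hx => ?_) (hw.abs.mul_const B)
    (ae_of_all _ fun u hu x hx => ?_)).2
  · rw [uIoc_of_le zero_le_one] at hu
    rw [Real.norm_eq_abs, abs_mul]
    exact mul_le_mul_of_nonneg_left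
      ((abs_mul_deriv_comp_mul_le hφ' hx.1 hu).trans hx.2.le) (abs_nonneg _)
  · rw [uIoc_of_le zero_le_one] at hu
    have hφx := (hφ.differentiableAt
      (isOpen_Ioo.mem_nhds (mul_mem_Ioo_of_mem_Ioc hx.1 hu))).hasDerivAt
    have hcomp := (hφx.comp x ((hasDerivAt_id x).mul_const u)).const_mul (w u)
    rw [one_mul, mul_comm (deriv φ (x * u))] at hcomp
    exact hcomp

end Rescaling

noncomputable def expRatio (α : ℝ → ℝ) (s : ℝ) : ℝ := s ^ (α 0 - α s)

section ExpRatio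

variable {α α' : ℝ → ℝ} {b L : ℝ}

lemma abs_sub_apply_zero_le_mul (hα : ∀ t ∈ Icc 0 b, HasDerivAt α (α' t) t)
    (hα' : ∀ t ∈ Icc 0 b, |α' t| ≤ L) {s : ℝ} (hs : s ∈ Icc 0 b) :
    |α s - α 0| ≤ L * s := by
  have h := (convex_Icc 0 b).norm_image_sub_le_of_norm_hasDerivWithin_le
    (fun t ht => (hα t ht).hasDerivWithinAt) hα' (left_mem_Icc.2 (hs.1.trans hs.2)) hs
  simpa [abs_of_nonneg hs.1] using h

lemma abs_log_mul_sub_le (hαL : ∀ s ∈ Ioo 0 b, |α s - α 0| ≤ L * s) {s : ℝ}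
    (hs : s ∈ Ioo 0 b) : |Real.log s * (α 0 - α s)| ≤ L * |s * Real.log s| := by
  rw [abs_mul, abs_sub_comm, abs_mul, abs_of_pos hs.1]
  nlinarith [mul_le_mul_of_nonneg_left (hαL s hs) (abs_nonneg (Real.log s))]

lemma exists_abs_expRatio_le (hαL : ∀ s ∈ Ioo 0 b, |α s - α 0| ≤ L * s) :
    ∃ M, ∀ s ∈ Ioo 0 b, |expRatio α s| ≤ M := by
  obtain ⟨N, hN⟩ := (isCompact_Icc (a := 0) (b := b)).exists_bound_of_continuousOn
    Real.continuous_mul_log.continuousOn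
  refine ⟨Real.exp (L * N), fun s hs => ?_⟩
  have hL : 0 ≤ L := nonneg_of_mul_nonneg_left ((abs_nonneg _).trans (hαL s hs)) hs.1
  rw [expRatio, abs_of_pos (Real.rpow_pos_of_pos hs.1 _), Real.rpow_def_of_pos hs.1,
    Real.exp_le_exp]
  exact (le_abs_self _).trans ((abs_log_mul_sub_le hαL hs).trans
    (mul_le_mul_of_nonneg_left (hN s (Ioo_subset_Icc_self hs)) hL))

lemma tendsto_expRatio_nhdsGT_zero (hαL : ∀ s ∈ Ioo 0 b, |α s - α 0| ≤ L * s) (hb : 0 < b) :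
    Tendsto (expRatio α) (𝓝[>] 0) (𝓝 1) := by
  have hIoo : Ioo 0 b ∈ 𝓝[>] (0:ℝ) := Ioo_mem_nhdsGT hb
  have hmul_log : Tendsto (fun s => L * ‖s * Real.log s‖) (𝓝[>] 0) (𝓝 0) := by
    simpa using ((Real.continuous_mul_log.tendsto 0).norm.const_mul L).mono_left
      nhdsWithin_le_nhds
  have hexponent : Tendsto (fun s => Real.log s * (α 0 - α s)) (𝓝[>] 0) (𝓝 0) :=
    squeeze_zero_norm' (Eventually.mono hIoo fun s hs => abs_log_mul_sub_le hαL hs) hmul_log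
  rw [← Real.exp_zero]
  refine ((Real.continuous_exp.tendsto 0).comp hexponent).congr' ?_
  filter_upwards [self_mem_nhdsWithin] with s (hs : 0 < s)
  rw [Function.comp_apply, expRatio, Real.rpow_def_of_pos hs]

lemma hasDerivAt_expRatio {a s : ℝ} (hα : HasDerivAt α a s) (hs : 0 < s) :
    HasDerivAt (expRatio α) (expRatio α s * ((α 0 - α s) / s - a * Real.log s)) s := by
  have h := (hasDerivAt_id s).rpow ((hasDerivAt_const s (α 0)).sub hα) hs
  rw [id, Real.rpow_sub_one hs.ne'] at h
  convert h using 1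
  · rfl
  · simp only [expRatio, Pi.sub_apply]
    ring

lemma differentiableOn_expRatio (hα : ∀ t ∈ Icc 0 b, HasDerivAt α (α' t) t) :
    DifferentiableOn ℝ (expRatio α) (Ioo 0 b) := fun s hs =>
  (hasDerivAt_expRatio (hα s (Ioo_subset_Icc_self hs)) hs.1).differentiableAt
    |>.differentiableWithinAt

lemma abs_deriv_expRatio_le (hα : ∀ t ∈ Icc 0 b, HasDerivAt α (α' t) t)
    (hα' : ∀ t ∈ Icc 0 b, |α' t| ≤ L) {M : ℝ} (hM : ∀ s ∈ Ioo 0 b, |expRatio α s| ≤ M) :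
    ∀ s ∈ Ioo 0 b, |deriv (expRatio α) s| ≤ M * L * (1 + |Real.log s|) := by
  intro s hs
  have hsIcc := Ioo_subset_Icc_self hs
  have hquot : |(α 0 - α s) / s| ≤ L := by
    rw [abs_div, abs_of_pos hs.1, div_le_iff₀ hs.1, abs_sub_comm]
    exact abs_sub_apply_zero_le_mul hα hα' hsIcc
  have hlog : |α' s * Real.log s| ≤ L * |Real.log s| := by
    rw [abs_mul]
    exact mul_le_mul_of_nonneg_right (hα' s hsIcc) (abs_nonneg _)
  rw [(hasDerivAt_expRatio (hα s hsIcc) hs.1).deriv, abs_mul]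
  calc |expRatio α s| * |(α 0 - α s) / s - α' s * Real.log s|
      ≤ M * (L + L * |Real.log s|) :=
        mul_le_mul (hM s hs) ((abs_sub _ _).trans (add_le_add hquot hlog)) (abs_nonneg _)
          ((abs_nonneg _).trans (hM s hs))
    _ = M * L * (1 + |Real.log s|) := by ring

end ExpRatio

lemma integrableOn_Ioo_of_abs_le_mul_log {f : ℝ → ℝ} {b A : ℝ} (hb : 0 ≤ b)
    (hf : AEStronglyMeasurable f (volume.restrict (Ioo 0 b)))
    (hfA : ∀ t ∈ Ioo 0 b, |f t| ≤ A * (2 + |Real.log t|)) :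
    IntegrableOn f (Ioo 0 b) := by
  have hbound : IntervalIntegrable (fun t => A * (2 + |Real.log t|)) volume 0 b :=
    (intervalIntegrable_const.add intervalIntegrable_log'.abs).const_mul A
  refine (((intervalIntegrable_iff_integrableOn_Ioc_of_le hb).1 hbound).mono_set
    Ioo_subset_Ioc_self).mono' hf ?_
  filter_upwards [ae_restrict_mem measurableSet_Ioo] with t ht
  exact hfA t ht

/-- the variable-exponent Abel kernel `k t = t^(-α t)` satisfies the
generalized Sonine condition with associated kernel `K t = t^(α 0 - 1) / κ`,
where `κ = Γ(α 0) Γ(1 - α 0)`:  `K ∈ L¹(0,b)`, and `g t = ∫₀ᵗ K(t-s) k(s) ds`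
is differentiable on `(0,b)`, with `g' ∈ L¹(0,b)` and `g(0⁺) = 1`. -/
theorem stmt0 (b L : ℝ) (hb : 0 < b) (α α' : ℝ → ℝ)
    (hα_diff : ∀ t ∈ Icc (0:ℝ) b, HasDerivAt α (α' t) t)
    (hα_range : ∀ t ∈ Icc (0:ℝ) b, 0 < α t ∧ α t < 1)
    (hα_lip : ∀ t ∈ Icc (0:ℝ) b, |α' t| ≤ L)
    (k K g : ℝ → ℝ)
    (hk : ∀ t : ℝ, k t = t ^ (-(α t)))
    (hK : ∀ t : ℝ, K t = t ^ (α 0 - 1) / (Real.Gamma (α 0) * Real.Gamma (1 - α 0)))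
    (hg : ∀ t : ℝ, g t = ∫ s in (0:ℝ)..t, K (t - s) * k s) :
    IntegrableOn K (Ioo 0 b) ∧
    (∀ t ∈ Ioo (0:ℝ) b, DifferentiableAt ℝ g t) ∧
    IntegrableOn (deriv g) (Ioo 0 b) ∧
    Tendsto g (nhdsWithin 0 (Ioi 0)) (nhds 1) := by
  obtain ⟨hc0, hc1⟩ := hα_range 0 ⟨le_rfl, hb.le⟩
  set κ := Real.Gamma (α 0) * Real.Gamma (1 - α 0)
  have hκ : 0 < κ := mul_pos (Real.Gamma_pos_of_pos hc0) (Real.Gamma_pos_of_pos (by linarith))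
  set w : ℝ → ℝ := fun u => u ^ (-α 0) * (1 - u) ^ (α 0 - 1)
  have hw : IntervalIntegrable w volume 0 1 :=
    intervalIntegrable_rpow_mul_one_sub_rpow (by linarith) (by linarith)
  have hwκ : ∫ u in (0:ℝ)..1, w u = κ := integral_rpow_neg_mul_one_sub_rpow hc0 hc1
  have hw_abs : ∫ u in (0:ℝ)..1, |w u| = κ := by
    rw [← hwκ]
    refine integral_congr fun u hu => abs_of_nonneg ?_
    rw [uIcc_of_le zero_le_one] at hu
    exact mul_nonneg (Real.rpow_nonneg hu.1 _) (Real.rpow_nonneg (by linarith [hu.2]) _)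
  have hg_eq : ∀ t > 0, g t = (∫ u in (0:ℝ)..1, w u * expRatio α (t * u)) / κ := by
    intro t ht
    simp_rw [hg, hK, hk, div_mul_eq_mul_div, intervalIntegral.integral_div]
    rw [integral_rpow_sub_mul_rpow_neg_eq _ _ ht]
    rfl
  have hαL : ∀ s ∈ Ioo 0 b, |α s - α 0| ≤ L * s := fun s hs =>
    abs_sub_apply_zero_le_mul hα_diff hα_lip (Ioo_subset_Icc_self hs)
  obtain ⟨M, hM⟩ := exists_abs_expRatio_le hαL
  have hφ' := abs_deriv_expRatio_le hα_diff hα_lip hM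
  have hg' : ∀ t ∈ Ioo 0 b,
      HasDerivAt g ((∫ u in (0:ℝ)..1, w u * (u * deriv (expRatio α) (t * u))) / κ) t :=
    fun t ht => ((hasDerivAt_integral_mul_comp_mul hw (differentiableOn_expRatio hα_diff) hM
      hφ' ht).div_const κ).congr_of_eventuallyEq
        (Eventually.mono (Ioi_mem_nhds ht.1) fun x hx => hg_eq x hx)
  refine ⟨?_, fun t ht => (hg' t ht).differentiableAt, ?_, ?_⟩
  · rw [show K = fun t => t ^ (α 0 - 1) / κ from funext hK]
    exact ((intervalIntegrable_iff_integrableOn_Ioc_of_le hb.le).1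
      ((intervalIntegrable_rpow' (by linarith)).div_const κ)).mono_set Ioo_subset_Ioc_self
  · refine integrableOn_Ioo_of_abs_le_mul_log (A := M * L) hb.le
      (measurable_deriv g).aestronglyMeasurable fun t ht => ?_
    rw [(hg' t ht).deriv, abs_div, abs_of_pos hκ, div_le_iff₀ hκ, mul_comm _ κ, ← hw_abs]
    exact abs_integral_mul_mul_deriv_comp_mul_le hw hφ' ht
  · have hlim := (tendsto_integral_mul_comp_mul_nhdsGT_zero hw
      (differentiableOn_expRatio hα_diff).continuousOn hM (tendsto_expRatio_nhdsGT_zero hαL hb)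
      hb).div_const κ
    simp_rw [mul_one] at hlim
    rw [hwκ, div_self hκ.ne'] at hlim
    exact hlim.congr' (Eventually.mono self_mem_nhdsWithin fun t ht => (hg_eq t ht).symm)
end

section
/- Let b > 0 and let α : [0,b] → ℝ be differentiable with |α'(t)| ≤ L on [0,b], and let C be a constant such that x·|ln x| ≤ C for all x ∈ (0,b]. Then for every fixed z ∈ (0,1] and every t ∈ (0,b), the derivative in t of (tz)^{α(0)−α(tz)} satisfies |d/dt (tz)^{α(0)−α(tz)}| = |(tz)^{α(0)−α(tz)} · z · (−α'(tz) ln(tz) + (α(0)−α(tz))/(tz))| ≤ e^{L·C} · L · (|ln(tz)| + 1). -/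
open Set Real

/-!
With `x = tz ∈ (0, b]` and `p = α 0 - α x`, the mean value inequality gives `|p| ≤ L x`.
Hence `p ln x ≤ L · x |ln x| ≤ L C`, so `x ^ p ≤ e^{LC}`, and the factor
`-α'(x) ln x + p / x` is at most `L |ln x| + L` in absolute value; the factor `z` is at most `1`.
-/

theorem abs_sub_le_mul_of_abs_deriv_le {f f' : ℝ → ℝ} {a b L : ℝ}
    (hf : ∀ t ∈ Icc a b, HasDerivAt f (f' t) t) (hf' : ∀ t ∈ Icc a b, |f' t| ≤ L)
    {x : ℝ} (hx : x ∈ Icc a b) : |f a - f x| ≤ L * (x - a) := by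
  rw [abs_sub_comm, ← Real.norm_eq_abs]
  refine norm_image_sub_le_of_norm_deriv_le_segment' (f' := f') (fun t ht => ?_)
    (fun t ht => hf' t ⟨ht.1, ht.2.le.trans hx.2⟩) x (right_mem_Icc.2 hx.1)
  exact (hf t ⟨ht.1, ht.2.trans hx.2⟩).hasDerivWithinAt

theorem HasDerivAt.id_rpow {g : ℝ → ℝ} {g' x : ℝ} (hg : HasDerivAt g g' x) (hx : 0 < x) :
    HasDerivAt (fun y => y ^ g y) (x ^ g x * (g' * Real.log x + g x / x)) x := by
  convert (hasDerivAt_id' x).rpow hg hx using 1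
  rw [rpow_sub_one hx.ne']
  ring

theorem rpow_le_exp_of_abs_le {x p L C : ℝ} (hx : 0 < x) (hL : 0 ≤ L) (hp : |p| ≤ L * x)
    (hC : x * |log x| ≤ C) : x ^ p ≤ exp (L * C) := by
  rw [rpow_def_of_pos hx, exp_le_exp]
  calc log x * p ≤ |p| * |log x| := by rw [← abs_mul, mul_comm]; exact le_abs_self _
    _ ≤ L * x * |log x| := by gcongr
    _ = L * (x * |log x|) := by ring
    _ ≤ L * C := by gcongr

theorem abs_mul_log_add_div_le {a p x L : ℝ} (hx : 0 < x) (ha : |a| ≤ L) (hp : |p| ≤ L * x) :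
    |a * log x + p / x| ≤ L * (|log x| + 1) := by
  have hpx : |p / x| ≤ L := by
    rw [abs_div, abs_of_pos hx, div_le_iff₀ hx]
    exact hp
  calc |a * log x + p / x| ≤ |a| * |log x| + |p / x| := by rw [← abs_mul]; exact abs_add_le _ _
    _ ≤ L * |log x| + L := by gcongr
    _ = L * (|log x| + 1) := by ring

theorem stmt4_general (b L C : ℝ) (α α' : ℝ → ℝ)
    (hα_diff : ∀ t ∈ Icc (0:ℝ) b, HasDerivAt α (α' t) t)
    (hα_lip : ∀ t ∈ Icc (0:ℝ) b, |α' t| ≤ L)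
    (hC : ∀ x ∈ Ioc (0:ℝ) b, x * |Real.log x| ≤ C) :
    ∀ z ∈ Ioc (0:ℝ) 1, ∀ t ∈ Ioo (0:ℝ) b,
      HasDerivAt (fun τ : ℝ => (τ * z) ^ (α 0 - α (τ * z)))
        ((t * z) ^ (α 0 - α (t * z)) * z *
          (-(α' (t * z)) * Real.log (t * z) + (α 0 - α (t * z)) / (t * z))) t ∧
      |(t * z) ^ (α 0 - α (t * z)) * z *
          (-(α' (t * z)) * Real.log (t * z) + (α 0 - α (t * z)) / (t * z))| ≤
        Real.exp (L * C) * L * (|Real.log (t * z)| + 1) := by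
  rintro z ⟨hz0, hz1⟩ t ⟨ht0, htb⟩
  have hx : t * z ∈ Ioc 0 b := ⟨mul_pos ht0 hz0, (mul_le_of_le_one_right ht0.le hz1).trans htb.le⟩
  have hxI : t * z ∈ Icc 0 b := Ioc_subset_Icc_self hx
  have hL : 0 ≤ L := (abs_nonneg _).trans (hα_lip _ hxI)
  have hp : |α 0 - α (t * z)| ≤ L * (t * z) := by
    simpa using abs_sub_le_mul_of_abs_deriv_le hα_diff hα_lip hxI
  have hpow := rpow_le_exp_of_abs_le hx.1 hL hp (hC _ hx)
  refine ⟨?_, ?_⟩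
  · rw [mul_right_comm _ z]
    exact (((hα_diff _ hxI).const_sub (α 0)).id_rpow hx.1).comp t (hasDerivAt_mul_const z)
  · rw [abs_mul, abs_mul, abs_of_pos (rpow_pos_of_pos hx.1 _), abs_of_pos hz0]
    calc _ ≤ exp (L * C) * 1 * (L * (|log (t * z)| + 1)) := by
          gcongr
          exact abs_mul_log_add_div_le hx.1 (by simpa using hα_lip _ hxI) hp
      _ = _ := by ring

/-- for fixed `z ∈ (0,1]` and `t ∈ (0,b)`, the map
`t ↦ (tz)^(α 0 - α (tz))` has derivative
`(tz)^(α 0 - α (tz)) · z · (-α'(tz) ln(tz) + (α 0 - α (tz))/(tz))`, whose absolute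
value is at most `exp(L C) · L · (|ln (tz)| + 1)`. -/
theorem stmt4 (b L C : ℝ) (hb : 0 < b) (α α' : ℝ → ℝ)
    (hα_diff : ∀ t ∈ Icc (0:ℝ) b, HasDerivAt α (α' t) t)
    (hα_lip : ∀ t ∈ Icc (0:ℝ) b, |α' t| ≤ L)
    (hC : ∀ x ∈ Ioc (0:ℝ) b, x * |Real.log x| ≤ C) :
    ∀ z ∈ Ioc (0:ℝ) 1, ∀ t ∈ Ioo (0:ℝ) b,
      HasDerivAt (fun τ : ℝ => (τ * z) ^ (α 0 - α (τ * z)))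
        ((t * z) ^ (α 0 - α (t * z)) * z *
          (-(α' (t * z)) * Real.log (t * z) + (α 0 - α (t * z)) / (t * z))) t ∧
      |(t * z) ^ (α 0 - α (t * z)) * z *
          (-(α' (t * z)) * Real.log (t * z) + (α 0 - α (t * z)) / (t * z))| ≤
        Real.exp (L * C) * L * (|Real.log (t * z)| + 1) :=
  stmt4_general b L C α α' hα_diff hα_lip hC
end

section
/- Let b > 0, let k ∈ L¹(0,b) satisfy the generalized Sonine condition with associated kernel K ∈ L¹(0,b) and function g, and let f : [0,b] → ℝ be continuous. If u ∈ L¹(0,b) satisfies the first-kind Volterra integral equation ∫₀ᵗ k(t−s) u(s) ds = f(t) for almost all t ∈ (0,b), then u satisfies ∫₀ᵗ g(t−y) u(y) dy = ∫₀ᵗ K(t−s) f(s) ds for almost all t ∈ (0,b). -/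
open MeasureTheory Set Filter intervalIntegral
open scoped Convolution

lemma stmt7_integral_eq_intervalIntegral {t : ℝ} (ht : 0 < t) (A B : ℝ → ℝ)
    (h : ∀ s, A s = (Ioo 0 t).indicator B s) :
    (∫ s, A s) = ∫ s in (0:ℝ)..t, B s := by
  rw [intervalIntegral.integral_of_le ht.le, integral_Ioc_eq_integral_Ioo,
    ← MeasureTheory.integral_indicator measurableSet_Ioo]
  exact integral_congr_ae (Eventually.of_forall h)

lemma stmt7_conv_eval {b t : ℝ} (ht : t ∈ Ioo 0 b) (A B C : ℝ → ℝ)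
    (h0 : ∀ s, s ∉ Ioo 0 t → A (t - s) * B s = 0)
    (h1 : ∀ s ∈ Ioo 0 t, A (t - s) * B s = C s) :
    (A ⋆[ContinuousLinearMap.mul ℝ ℝ] B) t = ∫ s in (0:ℝ)..t, C s := by
  rw [convolution_eq_swap]
  apply stmt7_integral_eq_intervalIntegral ht.1
  intro s
  by_cases hs : s ∈ Ioo 0 t
  · simp only [ContinuousLinearMap.mul_apply', indicator_of_mem hs]
    exact h1 s hs
  · simp only [ContinuousLinearMap.mul_apply', indicator_of_notMem hs]
    exact h0 s hs

lemma stmt7_conv_nonpos {b : ℝ} (φ ψ : ℝ → ℝ) {τ : ℝ} (hτ : τ ≤ 0) :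
    (((Ioo 0 b).indicator φ) ⋆[ContinuousLinearMap.mul ℝ ℝ] ((Ioo 0 b).indicator ψ)) τ = 0 := by
  rw [convolution_eq_swap]
  have h : ∀ s : ℝ, (ContinuousLinearMap.mul ℝ ℝ) ((Ioo 0 b).indicator φ (τ - s))
      ((Ioo 0 b).indicator ψ s) = 0 := by
    intro s
    by_cases hs : s ∈ Ioo 0 b
    · have hns : τ - s ∉ Ioo (0:ℝ) b := fun h => by
        have := h.1; have := hs.1; linarith
      simp [indicator_of_notMem hns]
    · simp [indicator_of_notMem hs]
  simp only [h]
  exact integral_zero _ _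

/-- if `k ∈ L¹(0,b)` satisfies the generalized Sonine condition with
associated kernel `K` and function `g`, `f` is continuous on `[0,b]`, and `u ∈ L¹(0,b)`
solves the first-kind equation `∫₀ᵗ k(t-s) u(s) ds = f t` a.e., then
`∫₀ᵗ g(t-y) u(y) dy = ∫₀ᵗ K(t-s) f(s) ds` a.e. on `(0,b)`. -/
theorem stmt7 (b : ℝ) (hb : 0 < b) (k K g f u : ℝ → ℝ)
    (hk : IntegrableOn k (Ioo 0 b))
    (hK : IntegrableOn K (Ioo 0 b))
    (hg_diff : Differentiable ℝ g)
    (hg' : IntegrableOn (deriv g) (Ioo 0 b))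
    (hg0 : g 0 = 1)
    (hgsc : ∀ᵐ t : ℝ, t ∈ Ioo (0:ℝ) b → (∫ s in (0:ℝ)..t, K (t - s) * k s) = g t)
    (hf : ContinuousOn f (Icc 0 b))
    (hu : IntegrableOn u (Ioo 0 b))
    (heq : ∀ᵐ t : ℝ, t ∈ Ioo (0:ℝ) b → (∫ s in (0:ℝ)..t, k (t - s) * u s) = f t) :
    ∀ᵐ t : ℝ, t ∈ Ioo (0:ℝ) b →
      (∫ y in (0:ℝ)..t, g (t - y) * u y) = ∫ s in (0:ℝ)..t, K (t - s) * f s := by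
  classical
  set L : ℝ →L[ℝ] ℝ →L[ℝ] ℝ := ContinuousLinearMap.mul ℝ ℝ with hLdef
  set k₀ : ℝ → ℝ := (Ioo 0 b).indicator k with hk₀def
  set K₀ : ℝ → ℝ := (Ioo 0 b).indicator K with hK₀def
  set u₀ : ℝ → ℝ := (Ioo 0 b).indicator u with hu₀def
  have hk₀ : Integrable k₀ := hk.integrable_indicator measurableSet_Ioo
  have hK₀ : Integrable K₀ := hK.integrable_indicator measurableSet_Ioo
  have hu₀ : Integrable u₀ := hu.integrable_indicator measurableSet_Ioo
  set F : ℝ → ℝ := K₀ ⋆[L] k₀ with hFdef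
  set G : ℝ → ℝ := k₀ ⋆[L] u₀ with hGdef
  have hF0 : ∀ τ : ℝ, τ ≤ 0 → F τ = 0 := fun τ hτ => stmt7_conv_nonpos K k hτ
  have hG0 : ∀ τ : ℝ, τ ≤ 0 → G τ = 0 := fun τ hτ => stmt7_conv_nonpos k u hτ
  -- membership helpers
  have hmem : ∀ {t : ℝ}, t ∈ Ioo (0:ℝ) b → ∀ {s : ℝ}, s ∈ Ioo (0:ℝ) t →
      s ∈ Ioo (0:ℝ) b ∧ t - s ∈ Ioo (0:ℝ) b := by
    intro t ht s hs
    exact ⟨⟨hs.1, hs.2.trans ht.2⟩, ⟨by linarith [hs.2], by linarith [hs.1, ht.2]⟩⟩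
  -- evaluation of F on (0,b)
  have hFeval : ∀ {t : ℝ}, t ∈ Ioo (0:ℝ) b → F t = ∫ s in (0:ℝ)..t, K (t - s) * k s := by
    intro t ht
    refine stmt7_conv_eval ht K₀ k₀ _ ?_ ?_
    · intro s hs
      by_cases hsb : s ∈ Ioo (0:ℝ) b
      · have : t - s ∉ Ioo (0:ℝ) b := by
          intro h
          have hst : t ≤ s := by
            by_contra hc; push_neg at hc; exact hs ⟨hsb.1, hc⟩
          have := h.1; linarith
        simp [hK₀def, indicator_of_notMem this]
      · simp [hk₀def, indicator_of_notMem hsb]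
    · intro s hs
      obtain ⟨h1, h2⟩ := hmem ht hs
      simp [hK₀def, hk₀def, indicator_of_mem h1, indicator_of_mem h2]
  have hGeval : ∀ {t : ℝ}, t ∈ Ioo (0:ℝ) b → G t = ∫ s in (0:ℝ)..t, k (t - s) * u s := by
    intro t ht
    refine stmt7_conv_eval ht k₀ u₀ _ ?_ ?_
    · intro s hs
      by_cases hsb : s ∈ Ioo (0:ℝ) b
      · have : t - s ∉ Ioo (0:ℝ) b := by
          intro h
          have hst : t ≤ s := by
            by_contra hc; push_neg at hc; exact hs ⟨hsb.1, hc⟩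
          have := h.1; linarith
        simp [hk₀def, indicator_of_notMem this]
      · simp [hu₀def, indicator_of_notMem hsb]
    · intro s hs
      obtain ⟨h1, h2⟩ := hmem ht hs
      simp [hk₀def, hu₀def, indicator_of_mem h1, indicator_of_mem h2]
  -- a.e. identities
  have hgsc' : ∀ᵐ τ : ℝ, τ ∈ Ioo (0:ℝ) b → F τ = g τ := by
    filter_upwards [hgsc] with τ h hτ
    rw [hFeval hτ, h hτ]
  have hfae : ∀ᵐ s : ℝ, s ∈ Ioo (0:ℝ) b → G s = f s := by
    filter_upwards [heq] with s h hs
    rw [hGeval hs, h hs]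
  -- existence facts
  have hconv1 : Integrable ((fun x => ‖k₀ x‖) ⋆[ContinuousLinearMap.mul ℝ ℝ] fun x => ‖u₀ x‖) :=
    Integrable.integrable_convolution (ContinuousLinearMap.mul ℝ ℝ) hk₀.norm hu₀.norm
  have htrip : ∀ᵐ t : ℝ, ConvolutionExistsAt (fun x => ‖K₀ x‖)
      ((fun x => ‖k₀ x‖) ⋆[ContinuousLinearMap.mul ℝ ℝ] fun x => ‖u₀ x‖) t
      (ContinuousLinearMap.mul ℝ ℝ) volume :=
    Integrable.ae_convolution_exists (L := ContinuousLinearMap.mul ℝ ℝ) hK₀.norm hconv1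
  filter_upwards [htrip] with t h3 ht
  have hne : ∀ᵐ y : ℝ, y ≠ t := by
    simp only [ae_iff, not_not, setOf_eq_eq_singleton]
    exact measure_singleton t
  have h2 : ∀ᵐ y : ℝ, t - y ∈ Ioo (0:ℝ) b → F (t - y) = g (t - y) :=
    (Measure.measurePreserving_sub_left volume t).quasiMeasurePreserving.ae hgsc'
  have step1 : (∫ y in (0:ℝ)..t, g (t - y) * u y) = ∫ y in (0:ℝ)..t, F (t - y) * u y := by
    apply intervalIntegral.integral_congr_ae
    filter_upwards [h2, hne] with y hy hyne hyI
    rw [uIoc_of_le ht.1.le] at hyI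
    have hyIoo : y ∈ Ioo (0:ℝ) t := ⟨hyI.1, lt_of_le_of_ne hyI.2 hyne⟩
    have : t - y ∈ Ioo (0:ℝ) b := (hmem ht hyIoo).2
    rw [hy this]
  have step2 : (F ⋆[L] u₀) t = ∫ y in (0:ℝ)..t, F (t - y) * u y := by
    refine stmt7_conv_eval ht F u₀ _ ?_ ?_
    · intro y hy
      by_cases hyb : y ∈ Ioo (0:ℝ) b
      · have hty : t ≤ y := by
          by_contra hc; push_neg at hc; exact hy ⟨hyb.1, hc⟩
        rw [hF0 (t - y) (by linarith), zero_mul]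
      · simp [hu₀def, indicator_of_notMem hyb]
    · intro y hy
      simp [hu₀def, indicator_of_mem (hmem ht hy).1]
  have step3 : (F ⋆[L] u₀) t = (K₀ ⋆[L] G) t := by
    refine convolution_assoc L L L L (fun x y z => mul_assoc x y z)
      hK₀.aestronglyMeasurable hk₀.aestronglyMeasurable hu₀.aestronglyMeasurable
      (Integrable.ae_convolution_exists (L := L) hK₀ hk₀)
      (Integrable.ae_convolution_exists (L := ContinuousLinearMap.mul ℝ ℝ) hk₀.norm hu₀.norm) h3
  have step4 : (K₀ ⋆[L] G) t = ∫ s in (0:ℝ)..t, K (t - s) * G s := by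
    refine stmt7_conv_eval ht K₀ G _ ?_ ?_
    · intro s hs
      by_cases hs0 : s ≤ 0
      · rw [hG0 s hs0, mul_zero]
      · push_neg at hs0
        have hts : t ≤ s := by
          by_contra hc; push_neg at hc; exact hs ⟨hs0, hc⟩
        have : t - s ∉ Ioo (0:ℝ) b := fun h => by have := h.1; linarith
        simp [hK₀def, indicator_of_notMem this]
    · intro s hs
      simp [hK₀def, indicator_of_mem (hmem ht hs).2]
  have step5 : (∫ s in (0:ℝ)..t, K (t - s) * G s) = ∫ s in (0:ℝ)..t, K (t - s) * f s := by
    apply intervalIntegral.integral_congr_ae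
    filter_upwards [hfae] with s hs hsI
    rw [uIoc_of_le ht.1.le] at hsI
    have : s ∈ Ioo (0:ℝ) b := ⟨hsI.1, lt_of_le_of_lt (hsI.2) ht.2⟩
    rw [hs this]
  rw [step1, ← step2, step3, step4, step5]
end

section
/- Let b > 0, let k ∈ L¹(0,b) satisfy the generalized Sonine condition with associated kernel K ∈ L¹(0,b) and function g, and let f ∈ C¹[0,b]. If u ∈ L¹(0,b) satisfies ∫₀ᵗ k(t−s) u(s) ds = f(t) for almost all t ∈ (0,b), then u satisfies the second-kind Volterra integral equation u(t) + ∫₀ᵗ g'(t−y) u(y) dy = K(t) f(0) + ∫₀ᵗ K(t−s) f'(s) ds for almost all t ∈ (0,b). -/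
/-!
Write `φ ∗ ψ` for the finite convolution `t ↦ ∫₀ᵗ φ(t - s) ψ(s) ds` (`laplaceConv`).
By the fundamental theorem of calculus `g = 1 + 1 ∗ g'` and `f = f 0 + 1 ∗ f'` on `(0,b)`,
so the Sonine condition together with associativity and commutativity of `∗` gives
`1 ∗ (u + g' ∗ u) = g ∗ u = (K ∗ k) ∗ u = K ∗ f = 1 ∗ (f 0 • K + K ∗ f')`.
Both sides are primitives of integrable functions, and Lebesgue's differentiation theorem
recovers the integrands almost everywhere. The rules for `∗` on `(0,b)` are inherited from
Mathlib's convolution on `ℝ` of the extensions by zero.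
-/

open MeasureTheory Set Filter intervalIntegral
open scoped Convolution
open Function (support)
open ContinuousLinearMap (lsmul)

theorem MeasureTheory.Integrable.ae_convolution_assoc {G : Type*} [AddGroup G]
    [MeasurableSpace G] [MeasurableAdd₂ G] [MeasurableNeg G] {μ : Measure G} [SFinite μ]
    [μ.IsAddRightInvariant]
    {f g k : G → ℝ} (hf : Integrable f μ) (hg : Integrable g μ) (hk : Integrable k μ) :
    ∀ᵐ x ∂μ, ((f ⋆[lsmul ℝ ℝ, μ] g) ⋆[lsmul ℝ ℝ, μ] k) x =
      (f ⋆[lsmul ℝ ℝ, μ] (g ⋆[lsmul ℝ ℝ, μ] k)) x := by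
  have hfg := hf.ae_convolution_exists (lsmul ℝ ℝ) hg
  have hgk := hg.norm.ae_convolution_exists (ContinuousLinearMap.mul ℝ ℝ) hk.norm
  filter_upwards [hf.norm.ae_convolution_exists (ContinuousLinearMap.mul ℝ ℝ)
    (hg.norm.integrable_convolution (ContinuousLinearMap.mul ℝ ℝ) hk.norm)] with x hfgk
  exact convolution_assoc _ _ _ _ (fun x y z => smul_assoc x y z) hf.aestronglyMeasurable
    hg.aestronglyMeasurable hk.aestronglyMeasurable hfg hgk hfgk

noncomputable def laplaceConv (φ ψ : ℝ → ℝ) (t : ℝ) : ℝ :=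
  ∫ s in (0:ℝ)..t, φ (t - s) * ψ s

theorem laplaceConv_comm (φ ψ : ℝ → ℝ) : laplaceConv φ ψ = laplaceConv ψ φ := by
  funext t
  have h := integral_comp_sub_left (fun s => φ s * ψ (t - s)) (a := 0) (b := t) t
  simp only [sub_sub_cancel, sub_self, sub_zero] at h
  unfold laplaceConv
  rw [h]
  simp only [mul_comm]

theorem laplaceConv_one_left (ψ : ℝ → ℝ) (t : ℝ) :
    laplaceConv 1 ψ t = ∫ s in (0:ℝ)..t, ψ s := by
  simp [laplaceConv]

theorem laplaceConv_smul_right (φ ψ : ℝ → ℝ) (c : ℝ) :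
    laplaceConv φ (c • ψ) = c • laplaceConv φ ψ := by
  funext t
  simp [laplaceConv, ← intervalIntegral.integral_const_mul, mul_left_comm]

theorem convolution_eq_laplaceConv {φ ψ : ℝ → ℝ} (hφ : support φ ⊆ Ioi 0)
    (hψ : support ψ ⊆ Ioi 0) {t : ℝ} (ht : 0 ≤ t) : (φ ⋆ ψ) t = laplaceConv φ ψ t := by
  rw [convolution_lsmul_swap, laplaceConv, integral_of_le ht,
    setIntegral_eq_integral_of_forall_compl_eq_zero]
  · rfl
  intro s hs
  rcases le_or_gt s 0 with hs0 | hs0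
  · rw [Function.notMem_support.1 fun h => (hψ h).out.not_ge hs0, mul_zero]
  · have : t - s ≤ 0 := by
      by_contra h
      exact hs ⟨hs0, by linarith⟩
    rw [Function.notMem_support.1 fun h => (hφ h).out.not_ge this, zero_mul]

section

variable {b : ℝ}

theorem laplaceConv_congr_of_eqOn {φ φ' ψ ψ' : ℝ → ℝ} (hφ : EqOn φ φ' (Ioo 0 b))
    (hψ : EqOn ψ ψ' (Ioo 0 b)) {t : ℝ} (ht : t ∈ Icc 0 b) :
    laplaceConv φ ψ t = laplaceConv φ' ψ' t := by
  simp only [laplaceConv, integral_of_le ht.1, integral_Ioc_eq_integral_Ioo]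
  refine setIntegral_congr_fun measurableSet_Ioo fun s hs => ?_
  rw [hφ ⟨by linarith [hs.2], by linarith [hs.1, ht.2]⟩, hψ ⟨hs.1, hs.2.trans_le ht.2⟩]

theorem laplaceConv_eq_convolution_indicator (φ ψ : ℝ → ℝ) {t : ℝ} (ht : t ∈ Icc 0 b) :
    laplaceConv φ ψ t = ((Ioo 0 b).indicator φ ⋆ (Ioo 0 b).indicator ψ) t := by
  have hsupp (χ : ℝ → ℝ) : support ((Ioo 0 b).indicator χ) ⊆ Ioi 0 :=
    support_indicator_subset.trans Ioo_subset_Ioi_self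
  have hind (χ : ℝ → ℝ) : EqOn χ ((Ioo 0 b).indicator χ) (Ioo 0 b) :=
    fun s hs => (indicator_of_mem hs χ).symm
  rw [convolution_eq_laplaceConv (hsupp φ) (hsupp ψ) ht.1]
  exact laplaceConv_congr_of_eqOn (hind φ) (hind ψ) ht

theorem laplaceConv_congr_ae {φ φ' ψ ψ' : ℝ → ℝ} (hφ : φ =ᵐ[volume.restrict (Ioo 0 b)] φ')
    (hψ : ψ =ᵐ[volume.restrict (Ioo 0 b)] ψ') :
    laplaceConv φ ψ =ᵐ[volume.restrict (Ioo 0 b)] laplaceConv φ' ψ' := by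
  have hind {χ χ' : ℝ → ℝ} (h : χ =ᵐ[volume.restrict (Ioo 0 b)] χ') :
      (Ioo 0 b).indicator χ =ᵐ[volume] (Ioo 0 b).indicator χ' := by
    filter_upwards [(ae_restrict_iff' measurableSet_Ioo).1 h] with s hs
    by_cases hsI : s ∈ Ioo 0 b
    · simp [hsI, hs hsI]
    · simp [hsI]
  refine ae_restrict_of_forall_mem measurableSet_Ioo fun t ht => ?_
  rw [laplaceConv_eq_convolution_indicator _ _ (Ioo_subset_Icc_self ht),
    laplaceConv_eq_convolution_indicator _ _ (Ioo_subset_Icc_self ht),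
    convolution_congr _ (hind hφ) (hind hψ)]

theorem MeasureTheory.IntegrableOn.integrableOn_laplaceConv {φ ψ : ℝ → ℝ}
    (hφ : IntegrableOn φ (Ioo 0 b)) (hψ : IntegrableOn ψ (Ioo 0 b)) :
    IntegrableOn (laplaceConv φ ψ) (Ioo 0 b) :=
  ((hφ.integrable_indicator measurableSet_Ioo).integrable_convolution (lsmul ℝ ℝ)
    (hψ.integrable_indicator measurableSet_Ioo)).integrableOn.congr_fun
    (fun _ ht => (laplaceConv_eq_convolution_indicator φ ψ (Ioo_subset_Icc_self ht)).symm)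
    measurableSet_Ioo

theorem laplaceConv_add_right {φ ψ₁ ψ₂ : ℝ → ℝ} (hφ : IntegrableOn φ (Ioo 0 b))
    (hψ₁ : IntegrableOn ψ₁ (Ioo 0 b)) (hψ₂ : IntegrableOn ψ₂ (Ioo 0 b)) :
    laplaceConv φ (ψ₁ + ψ₂) =ᵐ[volume.restrict (Ioo 0 b)]
      laplaceConv φ ψ₁ + laplaceConv φ ψ₂ := by
  have hφ' := hφ.integrable_indicator measurableSet_Ioo
  refine (ae_restrict_iff' measurableSet_Ioo).2 ?_
  filter_upwards
    [hφ'.ae_convolution_exists (lsmul ℝ ℝ) (hψ₁.integrable_indicator measurableSet_Ioo),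
      hφ'.ae_convolution_exists (lsmul ℝ ℝ) (hψ₂.integrable_indicator measurableSet_Ioo)]
    with t ht₁ ht₂ ht
  simp only [Pi.add_apply, laplaceConv_eq_convolution_indicator _ _ (Ioo_subset_Icc_self ht),
    indicator_add']
  exact ht₁.distrib_add ht₂

theorem laplaceConv_add_left {φ₁ φ₂ ψ : ℝ → ℝ} (hφ₁ : IntegrableOn φ₁ (Ioo 0 b))
    (hφ₂ : IntegrableOn φ₂ (Ioo 0 b)) (hψ : IntegrableOn ψ (Ioo 0 b)) :
    laplaceConv (φ₁ + φ₂) ψ =ᵐ[volume.restrict (Ioo 0 b)]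
      laplaceConv φ₁ ψ + laplaceConv φ₂ ψ := by
  simpa only [laplaceConv_comm _ ψ] using laplaceConv_add_right hψ hφ₁ hφ₂

theorem laplaceConv_assoc {φ ψ ω : ℝ → ℝ} (hφ : IntegrableOn φ (Ioo 0 b))
    (hψ : IntegrableOn ψ (Ioo 0 b)) (hω : IntegrableOn ω (Ioo 0 b)) :
    laplaceConv (laplaceConv φ ψ) ω =ᵐ[volume.restrict (Ioo 0 b)]
      laplaceConv φ (laplaceConv ψ ω) := by
  set T : (ℝ → ℝ) → ℝ → ℝ := (Ioo 0 b).indicator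
  have hsupp (χ : ℝ → ℝ) : support (T χ) ⊆ Ioi 0 :=
    support_indicator_subset.trans Ioo_subset_Ioi_self
  have hsupp_conv (χ₁ χ₂ : ℝ → ℝ) : support (T χ₁ ⋆ T χ₂) ⊆ Ioi 0 :=
    (support_convolution_subset _).trans <| add_subset_iff.2 fun x hx y hy =>
      mem_Ioi.2 (add_pos (hsupp χ₁ hx) (hsupp χ₂ hy))
  have hind (χ : ℝ → ℝ) : EqOn χ (T χ) (Ioo 0 b) := fun s hs => (indicator_of_mem hs χ).symm
  have hconv (χ₁ χ₂ : ℝ → ℝ) : EqOn (laplaceConv χ₁ χ₂) (T χ₁ ⋆ T χ₂) (Ioo 0 b) :=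
    fun t ht => laplaceConv_eq_convolution_indicator χ₁ χ₂ (Ioo_subset_Icc_self ht)
  refine (ae_restrict_iff' measurableSet_Ioo).2 ?_
  filter_upwards [(hφ.integrable_indicator measurableSet_Ioo).ae_convolution_assoc
    (hψ.integrable_indicator measurableSet_Ioo) (hω.integrable_indicator measurableSet_Ioo)]
    with t hassoc ht
  rw [laplaceConv_congr_of_eqOn (hconv φ ψ) (hind ω) (Ioo_subset_Icc_self ht),
    laplaceConv_congr_of_eqOn (hind φ) (hconv ψ ω) (Ioo_subset_Icc_self ht),
    ← convolution_eq_laplaceConv (hsupp_conv φ ψ) (hsupp ω) ht.1.le,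
    ← convolution_eq_laplaceConv (hsupp φ) (hsupp_conv ψ ω) ht.1.le, hassoc]

theorem ae_eq_add_laplaceConv_one_of_hasDerivAt {f f' : ℝ → ℝ}
    (hf : ∀ t ∈ Icc 0 b, HasDerivAt f (f' t) t) (hf' : IntegrableOn f' (Ioo 0 b)) :
    f =ᵐ[volume.restrict (Ioo 0 b)] f 0 • 1 + laplaceConv 1 f' := by
  refine ae_restrict_of_forall_mem measurableSet_Ioo fun t ht => ?_
  have hsub : uIcc 0 t ⊆ Icc 0 b := by
    rw [uIcc_of_le ht.1.le]
    exact Icc_subset_Icc_right ht.2.le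
  have hint : IntervalIntegrable f' volume 0 t :=
    (intervalIntegrable_iff_integrableOn_Ioo_of_le ht.1.le).2
      (hf'.mono_set (Ioo_subset_Ioo_right ht.2.le))
  simp [laplaceConv_one_left, integral_eq_sub_of_hasDerivAt (fun s hs => hf s (hsub hs)) hint]

theorem ae_eq_of_laplaceConv_one_left {φ ψ : ℝ → ℝ} (hφ : IntegrableOn φ (Ioo 0 b))
    (hψ : IntegrableOn ψ (Ioo 0 b))
    (h : laplaceConv 1 φ =ᵐ[volume.restrict (Ioo 0 b)] laplaceConv 1 ψ) :
    φ =ᵐ[volume.restrict (Ioo 0 b)] ψ := by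
  rcases le_or_gt b 0 with hb | hb
  · simp [Ioo_eq_empty_of_le hb, EventuallyEq]
  have hprimitive (χ : ℝ → ℝ) : laplaceConv 1 χ = fun t => ∫ s in (0:ℝ)..t, χ s :=
    funext (laplaceConv_one_left χ)
  have hcont {χ : ℝ → ℝ} (hχ : IntegrableOn χ (Ioo 0 b)) :
      ContinuousOn (laplaceConv 1 χ) (Ioo 0 b) := by
    have hχ' : IntegrableOn χ (uIcc 0 b) := by
      rw [uIcc_of_le hb.le]
      exact (integrableOn_Icc_iff_integrableOn_Ioo).2 hχ
    rw [hprimitive]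
    exact (continuousOn_primitive_interval hχ').mono
      (Ioo_subset_Icc_self.trans Icc_subset_uIcc)
  have hderiv {χ : ℝ → ℝ} (hχ : IntegrableOn χ (Ioo 0 b)) :
      ∀ᵐ t ∂volume.restrict (Ioo 0 b), HasDerivAt (laplaceConv 1 χ) (χ t) t := by
    have hχ' : IntervalIntegrable χ volume 0 b :=
      (intervalIntegrable_iff_integrableOn_Ioo_of_le hb.le).2 hχ
    refine (ae_restrict_iff' measurableSet_Ioo).2 ?_
    filter_upwards [hχ'.ae_hasDerivAt_integral] with t hχt ht
    rw [hprimitive]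
    exact hχt (Ioo_subset_Icc_self.trans Icc_subset_uIcc ht) 0 left_mem_uIcc
  have heq : EqOn (laplaceConv 1 φ) (laplaceConv 1 ψ) (Ioo 0 b) :=
    Measure.eqOn_Ioo_of_ae_eq volume h (hcont hφ) (hcont hψ)
  filter_upwards [ae_restrict_mem measurableSet_Ioo, hderiv hφ, hderiv hψ] with t ht hφt hψt
  exact hφt.unique <|
    hψt.congr_of_eventuallyEq (heq.eventuallyEq_of_mem (isOpen_Ioo.mem_nhds ht))

theorem add_laplaceConv_ae_eq_of_sonine {k K g' u f' : ℝ → ℝ} {c : ℝ}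
    (hk : IntegrableOn k (Ioo 0 b)) (hK : IntegrableOn K (Ioo 0 b))
    (hg' : IntegrableOn g' (Ioo 0 b)) (hu : IntegrableOn u (Ioo 0 b))
    (hf' : IntegrableOn f' (Ioo 0 b))
    (hsonine : laplaceConv K k =ᵐ[volume.restrict (Ioo 0 b)] 1 + laplaceConv 1 g')
    (hfirst : laplaceConv k u =ᵐ[volume.restrict (Ioo 0 b)] c • 1 + laplaceConv 1 f') :
    u + laplaceConv g' u =ᵐ[volume.restrict (Ioo 0 b)] c • K + laplaceConv K f' := by
  set μ := volume.restrict (Ioo (0:ℝ) b)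
  have h1 : IntegrableOn (1 : ℝ → ℝ) (Ioo 0 b) := integrableOn_const measure_Ioo_lt_top.ne
  have hg'u := hg'.integrableOn_laplaceConv hu
  have hKf' := hK.integrableOn_laplaceConv hf'
  refine ae_eq_of_laplaceConv_one_left (hu.add hg'u) ((hK.smul c).add hKf') ?_
  calc laplaceConv 1 (u + laplaceConv g' u)
      =ᵐ[μ] laplaceConv 1 u + laplaceConv 1 (laplaceConv g' u) :=
        laplaceConv_add_right h1 hu hg'u
    _ =ᵐ[μ] laplaceConv 1 u + laplaceConv (laplaceConv 1 g') u :=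
        EventuallyEq.rfl.add (laplaceConv_assoc h1 hg' hu).symm
    _ =ᵐ[μ] laplaceConv (1 + laplaceConv 1 g') u :=
        (laplaceConv_add_left h1 (h1.integrableOn_laplaceConv hg') hu).symm
    _ =ᵐ[μ] laplaceConv (laplaceConv K k) u := laplaceConv_congr_ae hsonine.symm EventuallyEq.rfl
    _ =ᵐ[μ] laplaceConv K (laplaceConv k u) := laplaceConv_assoc hK hk hu
    _ =ᵐ[μ] laplaceConv K (c • 1 + laplaceConv 1 f') :=
        laplaceConv_congr_ae EventuallyEq.rfl hfirst
    _ =ᵐ[μ] laplaceConv K (c • 1) + laplaceConv K (laplaceConv 1 f') :=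
        laplaceConv_add_right hK (h1.smul c) (h1.integrableOn_laplaceConv hf')
    _ =ᵐ[μ] c • laplaceConv K 1 + laplaceConv (laplaceConv K 1) f' := by
        rw [laplaceConv_smul_right]
        exact EventuallyEq.rfl.add (laplaceConv_assoc hK h1 hf').symm
    _ =ᵐ[μ] c • laplaceConv 1 K + laplaceConv 1 (laplaceConv K f') := by
        rw [laplaceConv_comm K 1]
        exact EventuallyEq.rfl.add (laplaceConv_assoc h1 hK hf')
    _ =ᵐ[μ] laplaceConv 1 (c • K + laplaceConv K f') := by
        rw [← laplaceConv_smul_right]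
        exact (laplaceConv_add_right h1 (hK.smul c) hKf').symm

end

theorem stmt8_general (b : ℝ) (k K g f f' u : ℝ → ℝ)
    (hk : IntegrableOn k (Ioo 0 b))
    (hK : IntegrableOn K (Ioo 0 b))
    (hg_diff : Differentiable ℝ g)
    (hg' : IntegrableOn (deriv g) (Ioo 0 b))
    (hg0 : g 0 = 1)
    (hgsc : ∀ᵐ t : ℝ, t ∈ Ioo (0:ℝ) b → (∫ s in (0:ℝ)..t, K (t - s) * k s) = g t)
    (hf : ∀ t ∈ Icc (0:ℝ) b, HasDerivAt f (f' t) t)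
    (hf' : ContinuousOn f' (Icc 0 b))
    (hu : IntegrableOn u (Ioo 0 b))
    (heq : ∀ᵐ t : ℝ, t ∈ Ioo (0:ℝ) b → (∫ s in (0:ℝ)..t, k (t - s) * u s) = f t) :
    ∀ᵐ t : ℝ, t ∈ Ioo (0:ℝ) b →
      u t + (∫ y in (0:ℝ)..t, deriv g (t - y) * u y) =
        K t * f 0 + ∫ s in (0:ℝ)..t, K (t - s) * f' s := by
  have hf'_int : IntegrableOn f' (Ioo 0 b) := hf'.integrableOn_Icc.mono_set Ioo_subset_Icc_self
  have hg_ftc := ae_eq_add_laplaceConv_one_of_hasDerivAt (fun t _ => (hg_diff t).hasDerivAt) hg'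
  rw [hg0, one_smul] at hg_ftc
  have hsonine : laplaceConv K k =ᵐ[volume.restrict (Ioo 0 b)] 1 + laplaceConv 1 (deriv g) :=
    EventuallyEq.trans ((ae_restrict_iff' measurableSet_Ioo).2 hgsc) hg_ftc
  have hfirst : laplaceConv k u =ᵐ[volume.restrict (Ioo 0 b)] f 0 • 1 + laplaceConv 1 f' :=
    EventuallyEq.trans ((ae_restrict_iff' measurableSet_Ioo).2 heq)
      (ae_eq_add_laplaceConv_one_of_hasDerivAt hf hf'_int)
  filter_upwards [(ae_restrict_iff' measurableSet_Ioo).1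
    (add_laplaceConv_ae_eq_of_sonine hk hK hg' hu hf'_int hsonine hfirst)] with t ht ht'
  simpa [laplaceConv, mul_comm] using ht ht'

/-- under the generalized Sonine condition and `f ∈ C¹[0,b]`, any
`u ∈ L¹(0,b)` solving the first-kind equation a.e. also solves the second-kind
Volterra equation
`u t + ∫₀ᵗ g'(t-y) u(y) dy = K t · f 0 + ∫₀ᵗ K(t-s) f'(s) ds` a.e. on `(0,b)`. -/
theorem stmt8 (b : ℝ) (hb : 0 < b) (k K g f f' u : ℝ → ℝ)
    (hk : IntegrableOn k (Ioo 0 b))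
    (hK : IntegrableOn K (Ioo 0 b))
    (hg_diff : Differentiable ℝ g)
    (hg' : IntegrableOn (deriv g) (Ioo 0 b))
    (hg0 : g 0 = 1)
    (hgsc : ∀ᵐ t : ℝ, t ∈ Ioo (0:ℝ) b → (∫ s in (0:ℝ)..t, K (t - s) * k s) = g t)
    (hf : ∀ t ∈ Icc (0:ℝ) b, HasDerivAt f (f' t) t)
    (hf' : ContinuousOn f' (Icc 0 b))
    (hu : IntegrableOn u (Ioo 0 b))
    (heq : ∀ᵐ t : ℝ, t ∈ Ioo (0:ℝ) b → (∫ s in (0:ℝ)..t, k (t - s) * u s) = f t) :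
    ∀ᵐ t : ℝ, t ∈ Ioo (0:ℝ) b →
      u t + (∫ y in (0:ℝ)..t, deriv g (t - y) * u y) =
        K t * f 0 + ∫ s in (0:ℝ)..t, K (t - s) * f' s :=
  stmt8_general b k K g f f' u hk hK hg_diff hg' hg0 hgsc hf hf' hu heq
end

section
/- Let b > 0, let k ∈ L¹(0,b) satisfy the generalized Sonine condition, and let f ∈ C¹[0,b]. Then there exists u ∈ L¹(0,b) satisfying ∫₀ᵗ k(t−s) u(s) ds = f(t) for almost all t ∈ (0,b). -/
/-!
Extend every function by zero off `(0, b)`. The function `u₀ = f 0 • K + K ⋆ f'`, the derivative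
of `K ⋆ f`, satisfies `k ⋆ u₀ = f + g' ⋆ f` on `(0, b)`: the Sonine condition gives `k ⋆ K = g`,
and integration by parts gives `g ⋆ f' = f - f 0 • g + g' ⋆ f`. Let `u` solve the Volterra
equation of the second kind `u + g' ⋆ u = u₀`. Then `w = k ⋆ u` solves `w + g' ⋆ w = k ⋆ u₀`,
an equation that `f` solves too, so `w = f` on `(0, b)` by uniqueness.

Existence and uniqueness for `u + a ⋆ u = w` on `(0, b)` come from the contraction principle
in `L¹`: multiplying by `exp (-c t)` commutes with convolution and makes `‖a‖₁ < 1` for large `c`.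
-/

open MeasureTheory Set Filter intervalIntegral
open scoped Convolution
open Function ContinuousLinearMap Topology

section Causal

variable {p p₁ p₂ q q₁ q₂ : ℝ → ℝ}

theorem convolution_lsmul_comm (p q : ℝ → ℝ) : p ⋆ q = q ⋆ p := by
  ext x
  rw [convolution_lsmul, convolution_lsmul_swap]
  simp only [smul_eq_mul, mul_comm]

theorem support_convolution_subset_Ioi (hp : support p ⊆ Ioi 0) (hq : support q ⊆ Ioi 0) :
    support (p ⋆ q) ⊆ Ioi 0 := by
  refine (support_convolution_subset (L := lsmul ℝ ℝ)).trans ?_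
  rintro _ ⟨x, hx, y, hy, rfl⟩
  exact add_pos (mem_Ioi.1 (hp hx)) (mem_Ioi.1 (hq hy))

theorem convolution_eq_intervalIntegral (hp : support p ⊆ Ioi 0) (hq : support q ⊆ Ioi 0)
    {t : ℝ} (ht : 0 ≤ t) : (p ⋆ q) t = ∫ s in 0..t, p (t - s) * q s := by
  have hvanish : ∀ s ∉ Ioo 0 t, p (t - s) * q s = 0 := by
    intro s hs
    rcases le_or_gt s 0 with hs0 | hs0
    · rw [notMem_support.1 fun h => (hq h).not_ge hs0, mul_zero]
    · have : t - s ≤ 0 := by linarith [not_lt.1 fun h => hs ⟨hs0, h⟩]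
      rw [notMem_support.1 fun h => (hp h).not_ge this, zero_mul]
  rw [convolution_lsmul_swap, integral_of_le ht, integral_Ioc_eq_integral_Ioo,
    setIntegral_eq_integral_of_forall_compl_eq_zero hvanish]
  rfl

theorem support_indicator_Ioo_subset_Ioi (b : ℝ) (p : ℝ → ℝ) :
    support ((Ioo 0 b).indicator p) ⊆ Ioi 0 :=
  support_indicator_subset.trans Ioo_subset_Ioi_self

theorem indicator_convolution_indicator_eq_intervalIntegral {b t : ℝ} (ht : t ∈ Ioo 0 b)
    (p q : ℝ → ℝ) :
    ((Ioo 0 b).indicator p ⋆ (Ioo 0 b).indicator q) t = ∫ s in 0..t, p (t - s) * q s := by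
  rw [convolution_eq_intervalIntegral (support_indicator_Ioo_subset_Ioi b p)
    (support_indicator_Ioo_subset_Ioi b q) ht.1.le]
  rw [integral_of_le ht.1.le, integral_of_le ht.1.le, integral_Ioc_eq_integral_Ioo,
    integral_Ioc_eq_integral_Ioo]
  refine setIntegral_congr_fun measurableSet_Ioo fun s hs => ?_
  have hts : t - s ∈ Ioo 0 b := ⟨by linarith [hs.2], by linarith [hs.1, ht.2]⟩
  have hs' : s ∈ Ioo 0 b := ⟨hs.1, hs.2.trans ht.2⟩
  rw [indicator_of_mem hts, indicator_of_mem hs']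

theorem convolution_congr_right_of_ae_eqOn_Ioo {c x : ℝ} (hp : support p ⊆ Ioi 0)
    (hq₁ : support q₁ ⊆ Ioi 0) (hq₂ : support q₂ ⊆ Ioi 0)
    (h : ∀ᵐ y, y ∈ Ioo 0 c → q₁ y = q₂ y) (hx : x ≤ c) : (p ⋆ q₁) x = (p ⋆ q₂) x := by
  simp only [convolution_lsmul, smul_eq_mul]
  have h' : ∀ᵐ s : ℝ, x - s ∈ Ioo 0 c → q₁ (x - s) = q₂ (x - s) :=
    (quasiMeasurePreserving_sub_left_of_right_invariant volume x).tendsto_ae.eventually h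
  refine integral_congr_ae (h'.mono fun s hs => ?_)
  dsimp only
  rcases le_or_gt s 0 with hs0 | hs0
  · rw [notMem_support.1 fun h => (hp h).not_ge hs0, zero_mul, zero_mul]
  rcases le_or_gt (x - s) 0 with hxs | hxs
  · rw [notMem_support.1 fun h => (hq₁ h).not_ge hxs,
      notMem_support.1 fun h => (hq₂ h).not_ge hxs]
  · rw [hs ⟨hxs, by linarith⟩]

theorem convolution_congr_left_of_ae_eqOn_Ioo {c x : ℝ} (hq : support q ⊆ Ioi 0)
    (hp₁ : support p₁ ⊆ Ioi 0) (hp₂ : support p₂ ⊆ Ioi 0)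
    (h : ∀ᵐ y, y ∈ Ioo 0 c → p₁ y = p₂ y) (hx : x ≤ c) : (p₁ ⋆ q) x = (p₂ ⋆ q) x := by
  rw [convolution_lsmul_comm p₁, convolution_lsmul_comm p₂]
  exact convolution_congr_right_of_ae_eqOn_Ioo hq hp₁ hp₂ h hx

end Causal

section L1

variable {p q r : ℝ → ℝ}

theorem norm_convolution_le (p q : ℝ → ℝ) (x : ℝ) :
    ‖(p ⋆ q) x‖ ≤ ((fun y => ‖p y‖) ⋆ fun y => ‖q y‖) x := by
  by_cases h : ConvolutionExistsAt p q x (lsmul ℝ ℝ) volume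
  · simpa only [convolution_lsmul, smul_eq_mul, norm_mul] using
      MeasureTheory.norm_integral_le_integral_norm fun t => p t * q (x - t)
  · rw [convolution_def, integral_undef h, norm_zero, convolution_lsmul]
    exact integral_nonneg fun t => by positivity

theorem integral_norm_convolution_le (hp : Integrable p) (hq : Integrable q) :
    ∫ x, ‖(p ⋆ q) x‖ ≤ (∫ x, ‖p x‖) * ∫ x, ‖q x‖ :=
  calc ∫ x, ‖(p ⋆ q) x‖ ≤ ∫ x, ((fun y => ‖p y‖) ⋆ fun y => ‖q y‖) x :=
        integral_mono (hp.integrable_convolution (lsmul ℝ ℝ) hq).norm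
          (hp.norm.integrable_convolution (lsmul ℝ ℝ) hq.norm) (norm_convolution_le p q)
    _ = (∫ x, ‖p x‖) * ∫ x, ‖q x‖ := by
        simpa using integral_convolution (lsmul ℝ ℝ) hp.norm hq.norm

theorem MeasureTheory.Integrable.convolution_add_ae (hp : Integrable p) (hq : Integrable q)
    (hr : Integrable r) : p ⋆ (q + r) =ᵐ[volume] p ⋆ q + p ⋆ r := by
  filter_upwards [hp.ae_convolution_exists (lsmul ℝ ℝ) hq,
    hp.ae_convolution_exists (lsmul ℝ ℝ) hr] with x hq hr
  exact hq.distrib_add hr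

theorem MeasureTheory.Integrable.convolution_sub_ae (hp : Integrable p) (hq : Integrable q)
    (hr : Integrable r) : p ⋆ (q - r) =ᵐ[volume] p ⋆ q - p ⋆ r := by
  filter_upwards [hp.ae_convolution_exists (lsmul ℝ ℝ) hq,
    hp.ae_convolution_exists (lsmul ℝ ℝ) hr] with x hq hr
  simp only [convolution_def, Pi.sub_apply, map_sub]
  exact integral_sub hq hr

theorem MeasureTheory.Integrable.convolution_assoc_ae (hp : Integrable p) (hq : Integrable q)
    (hr : Integrable r) : (p ⋆ q) ⋆ r =ᵐ[volume] p ⋆ (q ⋆ r) := by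
  filter_upwards [hp.norm.ae_convolution_exists (lsmul ℝ ℝ)
    (hq.norm.integrable_convolution (lsmul ℝ ℝ) hr.norm)] with x hx
  exact convolution_assoc _ _ _ _ (fun x y z => smul_assoc x y z) hp.aestronglyMeasurable
    hq.aestronglyMeasurable hr.aestronglyMeasurable (hp.ae_convolution_exists (lsmul ℝ ℝ) hq)
    (hq.norm.ae_convolution_exists (lsmul ℝ ℝ) hr.norm) hx

end L1

section Contraction

variable {a : ℝ → ℝ} {S : Set ℝ}

theorem MeasureTheory.Integrable.indicator_convolution (ha : Integrable a) (hS : MeasurableSet S)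
    (φ : ℝ →₁[volume] ℝ) : Integrable (S.indicator (a ⋆ ⇑φ)) :=
  (ha.integrable_convolution (lsmul ℝ ℝ) (L1.integrable_coeFn φ)).indicator hS

noncomputable def indicatorConvolutionL1 (ha : Integrable a) (hS : MeasurableSet S) :
    (ℝ →₁[volume] ℝ) →L[ℝ] ℝ →₁[volume] ℝ :=
  LinearMap.mkContinuous
    { toFun := fun φ => (ha.indicator_convolution hS φ).toL1 _
      map_add' := fun φ ψ => by
        rw [← Integrable.toL1_add, Integrable.toL1_eq_toL1_iff, ← indicator_add']
        rw [convolution_congr (lsmul ℝ ℝ) (EventuallyEq.refl _ a) (Lp.coeFn_add φ ψ)]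
        filter_upwards [ha.convolution_add_ae (L1.integrable_coeFn φ)
          (L1.integrable_coeFn ψ)] with x hx
        classical
        rw [indicator_apply, indicator_apply, hx]
      map_smul' := fun c φ => by
        rw [RingHom.id_apply, ← Integrable.toL1_smul, Integrable.toL1_eq_toL1_iff,
          convolution_congr (lsmul ℝ ℝ) (EventuallyEq.refl _ a) (Lp.coeFn_smul c φ),
          convolution_smul]
        exact Eventually.of_forall (indicator_const_smul_apply S c _) }
    (∫ x, ‖a x‖) fun φ => by
      rw [LinearMap.coe_mk, AddHom.coe_mk, L1.norm_of_fun_eq_integral_norm,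
        L1.norm_eq_integral_norm]
      calc ∫ x, ‖S.indicator (a ⋆ ⇑φ) x‖ ≤ ∫ x, ‖(a ⋆ ⇑φ) x‖ :=
            integral_mono (ha.indicator_convolution hS φ).norm
              (ha.integrable_convolution (lsmul ℝ ℝ) (L1.integrable_coeFn φ)).norm
              fun x => norm_indicator_le_norm_self _ x
        _ ≤ _ := integral_norm_convolution_le ha (L1.integrable_coeFn φ)

theorem coeFn_indicatorConvolutionL1 (ha : Integrable a) (hS : MeasurableSet S)
    (φ : ℝ →₁[volume] ℝ) : indicatorConvolutionL1 ha hS φ =ᵐ[volume] S.indicator (a ⋆ ⇑φ) :=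
  (ha.indicator_convolution hS φ).coeFn_toL1

theorem norm_indicatorConvolutionL1_le (ha : Integrable a) (hS : MeasurableSet S) :
    ‖indicatorConvolutionL1 ha hS‖ ≤ ∫ x, ‖a x‖ :=
  LinearMap.mkContinuous_norm_le _ (integral_nonneg fun _ => norm_nonneg _) _

theorem exists_add_indicator_convolution_eq (ha : Integrable a) (ha1 : ∫ x, ‖a x‖ < 1)
    (hS : MeasurableSet S) {w : ℝ → ℝ} (hw : Integrable w) :
    ∃ v : ℝ → ℝ, Integrable v ∧ ∀ᵐ t, v t + S.indicator (a ⋆ v) t = w t := by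
  set T := indicatorConvolutionL1 ha hS
  have hT : ‖-T‖ < 1 :=
    (norm_neg T).trans_lt ((norm_indicatorConvolutionL1_le ha hS).trans_lt ha1)
  obtain ⟨v, hv⟩ : ∃ v, v + T v = hw.toL1 w := by
    have := congrArg (· (hw.toL1 w)) (Units.oneSub (-T) hT).mul_inv
    simp only [Units.val_oneSub, sub_neg_eq_add] at this
    exact ⟨_, this⟩
  refine ⟨v, L1.integrable_coeFn v, ?_⟩
  filter_upwards [Lp.coeFn_add v (T v), coeFn_indicatorConvolutionL1 ha hS v,
    hw.coeFn_toL1, (by rw [hv] : ⇑(v + T v) =ᵐ[volume] ⇑(hw.toL1 w))] with t h₁ h₂ h₃ h₄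
  rw [← h₂, ← Pi.add_apply, ← h₁, h₄, h₃]

theorem ae_eq_zero_of_norm_le_norm_convolution {q : ℝ → ℝ} (ha : Integrable a)
    (ha1 : ∫ x, ‖a x‖ < 1) (hq : Integrable q) (h : ∀ᵐ x, ‖q x‖ ≤ ‖(a ⋆ q) x‖) :
    q =ᵐ[volume] 0 := by
  have hle : ∫ x, ‖q x‖ ≤ (∫ x, ‖a x‖) * ∫ x, ‖q x‖ :=
    (integral_mono_ae hq.norm (ha.integrable_convolution (lsmul ℝ ℝ) hq).norm h).trans
      (integral_norm_convolution_le ha hq)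
  have hq0 : ∫ x, ‖q x‖ = 0 := by
    have : 0 ≤ ∫ x, ‖q x‖ := integral_nonneg fun x => norm_nonneg (q x)
    nlinarith
  filter_upwards [(integral_eq_zero_iff_of_nonneg (fun x => norm_nonneg (q x)) hq.norm).1 hq0]
    with x hx
  simpa using hx

end Contraction

section ExpWeight

variable {p q : ℝ → ℝ} {b : ℝ}

noncomputable def expMul (c : ℝ) (p : ℝ → ℝ) (t : ℝ) : ℝ := Real.exp (c * t) * p t

theorem expMul_expMul (c d : ℝ) (p : ℝ → ℝ) : expMul c (expMul d p) = expMul (c + d) p := by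
  ext t
  simp only [expMul, add_mul, Real.exp_add, mul_assoc]

theorem expMul_neg_expMul (c : ℝ) (p : ℝ → ℝ) : expMul c (expMul (-c) p) = p := by
  rw [expMul_expMul, add_neg_cancel]
  ext t
  simp [expMul]

theorem support_expMul (c : ℝ) (p : ℝ → ℝ) : support (expMul c p) = support p :=
  support_mul_of_ne_zero_left (fun t => (Real.exp_pos (c * t)).ne') p

theorem expMul_convolution (c : ℝ) (p q : ℝ → ℝ) :
    expMul c p ⋆ expMul c q = expMul c (p ⋆ q) := by
  ext x
  simp only [convolution_lsmul, expMul, smul_eq_mul, ← MeasureTheory.integral_const_mul]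
  refine integral_congr_ae (Eventually.of_forall fun s => ?_)
  dsimp only
  rw [show c * x = c * s + c * (x - s) by ring, Real.exp_add]
  ring

theorem integrable_expMul (hp : Integrable p) (hp' : support p ⊆ Ioo 0 b) (c : ℝ) :
    Integrable (expMul c p) := by
  refine (hp.norm.const_mul (Real.exp (|c| * b))).mono'
    ((Real.continuous_exp.comp (continuous_const_mul c)).aestronglyMeasurable.mul
      hp.aestronglyMeasurable) (Eventually.of_forall fun t => ?_)
  by_cases ht : t ∈ Ioo 0 b
  · rw [expMul, norm_mul, Real.norm_of_nonneg (Real.exp_pos _).le]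
    refine mul_le_mul_of_nonneg_right (Real.exp_le_exp.2 ?_) (norm_nonneg _)
    calc c * t ≤ |c| * t := mul_le_mul_of_nonneg_right (le_abs_self c) ht.1.le
      _ ≤ |c| * b := mul_le_mul_of_nonneg_left ht.2.le (abs_nonneg c)
  · rw [expMul, notMem_support.1 fun h => ht (hp' h), mul_zero, norm_zero]
    positivity

theorem exists_integral_norm_expMul_neg_lt_one (hp : Integrable p) (hp' : support p ⊆ Ioi 0) :
    ∃ c, ∫ t, ‖expMul (-c) p t‖ < 1 := by
  have hmeas : ∀ n : ℕ, AEStronglyMeasurable (fun t => ‖expMul (-n) p t‖) volume := fun n =>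
    ((Real.continuous_exp.comp (continuous_const_mul _)).aestronglyMeasurable.mul
      hp.aestronglyMeasurable).norm
  have hle : ∀ (n : ℕ) t, ‖expMul (-n) p t‖ ≤ ‖p t‖ := by
    intro n t
    by_cases ht : 0 < t
    · rw [expMul, norm_mul, Real.norm_of_nonneg (Real.exp_pos _).le]
      refine mul_le_of_le_one_left (norm_nonneg _) (Real.exp_le_one_iff.2 ?_)
      nlinarith [(n.cast_nonneg : (0:ℝ) ≤ n)]
    · rw [expMul, notMem_support.1 fun h => ht (hp' h), mul_zero]
  have hlim : ∀ t, Tendsto (fun n : ℕ => ‖expMul (-n) p t‖) atTop (𝓝 0) := by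
    intro t
    by_cases ht : 0 < t
    · have : Tendsto (fun n : ℕ => Real.exp (-t) ^ n) atTop (𝓝 0) :=
        tendsto_pow_atTop_nhds_zero_of_lt_one (Real.exp_pos _).le
          (Real.exp_lt_one_iff.2 (neg_lt_zero.2 ht))
      simpa [expMul, ← Real.exp_nat_mul, mul_comm] using (this.mul_const (p t)).norm
    · simp [expMul, notMem_support.1 fun h => ht (hp' h)]
  have := tendsto_integral_of_dominated_convergence _ hmeas hp.norm
    (fun n => Eventually.of_forall fun t => by simpa using hle n t) (Eventually.of_forall hlim)
  obtain ⟨n, hn⟩ := (this.eventually_lt_const (by simpa using one_pos)).exists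
  exact ⟨n, by simpa using hn⟩

end ExpWeight

section Volterra

variable {a : ℝ → ℝ} {b : ℝ}

theorem exists_volterra_solution (ha : Integrable a) (ha' : support a ⊆ Ioo 0 b)
    {w : ℝ → ℝ} (hw : Integrable w) :
    ∃ u : ℝ → ℝ, Integrable u ∧ support u ⊆ Ioo 0 b ∧
      ∀ᵐ t, t ∈ Ioo 0 b → u t + (a ⋆ u) t = w t := by
  have hI : MeasurableSet (Ioo (0:ℝ) b) := measurableSet_Ioo
  obtain ⟨c, hc⟩ := exists_integral_norm_expMul_neg_lt_one ha (ha'.trans Ioo_subset_Ioi_self)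
  have hwc : Integrable (expMul (-c) ((Ioo 0 b).indicator w)) :=
    integrable_expMul (hw.indicator hI) support_indicator_subset (-c)
  obtain ⟨v, hv, hv_eq⟩ := exists_add_indicator_convolution_eq (integrable_expMul ha ha' (-c))
    hc hI hwc
  have hv_ind : (Ioo 0 b).indicator v =ᵐ[volume] v := by
    filter_upwards [hv_eq] with t ht
    by_cases htI : t ∈ Ioo 0 b
    · exact indicator_of_mem htI v
    · rw [indicator_of_notMem htI, expMul, indicator_of_notMem htI, mul_zero, add_zero] at ht
      rw [indicator_of_notMem htI, ht]
  refine ⟨expMul c ((Ioo 0 b).indicator v),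
    integrable_expMul (hv.indicator hI) support_indicator_subset c,
    (support_expMul c _).trans_subset support_indicator_subset, ?_⟩
  have hconv : a ⋆ expMul c ((Ioo 0 b).indicator v) = expMul c (expMul (-c) a ⋆ v) := by
    conv_lhs => rw [← expMul_neg_expMul c a]
    rw [expMul_convolution, convolution_congr (lsmul ℝ ℝ) EventuallyEq.rfl hv_ind]
  filter_upwards [hv_eq] with t ht htI
  rw [indicator_of_mem htI, expMul, indicator_of_mem htI, neg_mul] at ht
  rw [hconv, expMul, expMul, indicator_of_mem htI, ← mul_add, ht, ← mul_assoc, ← Real.exp_add,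
    add_neg_cancel, Real.exp_zero, one_mul]

theorem ae_eq_zero_of_add_convolution_eq_zero (ha : Integrable a) (ha' : support a ⊆ Ioo 0 b)
    {D : ℝ → ℝ} (hD : Integrable D) (hD' : support D ⊆ Ioo 0 b)
    (h : ∀ᵐ t, t ∈ Ioo 0 b → D t + (a ⋆ D) t = 0) : D =ᵐ[volume] 0 := by
  obtain ⟨c, hc⟩ := exists_integral_norm_expMul_neg_lt_one ha (ha'.trans Ioo_subset_Ioi_self)
  have hq : expMul (-c) D =ᵐ[volume] 0 := by
    refine ae_eq_zero_of_norm_le_norm_convolution (integrable_expMul ha ha' (-c)) hc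
      (integrable_expMul hD hD' (-c)) ?_
    filter_upwards [h] with t ht
    rw [expMul_convolution]
    by_cases htI : t ∈ Ioo 0 b
    · rw [expMul, expMul, eq_neg_of_add_eq_zero_left (ht htI), mul_neg, norm_neg]
    · rw [expMul, notMem_support.1 fun h => htI (hD' h), mul_zero, norm_zero]
      exact norm_nonneg _
  filter_upwards [hq] with t ht
  simpa [expMul] using ht

theorem ae_eqOn_Ioo_of_add_convolution_eq (ha : Integrable a) (ha' : support a ⊆ Ioo 0 b)
    {x₁ x₂ : ℝ → ℝ} (hx₁ : Integrable x₁) (hx₁' : support x₁ ⊆ Ioi 0)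
    (hx₂ : Integrable x₂) (hx₂' : support x₂ ⊆ Ioi 0)
    (h : ∀ᵐ t, t ∈ Ioo 0 b → x₁ t + (a ⋆ x₁) t = x₂ t + (a ⋆ x₂) t) :
    ∀ᵐ t, t ∈ Ioo 0 b → x₁ t = x₂ t := by
  set D := (Ioo 0 b).indicator (x₁ - x₂)
  have hsub : support (x₁ - x₂) ⊆ Ioi 0 :=
    (support_sub x₁ x₂).trans (union_subset hx₁' hx₂')
  have hconv : ∀ t ∈ Ioo 0 b, (a ⋆ D) t = (a ⋆ (x₁ - x₂)) t := fun t ht =>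
    convolution_congr_right_of_ae_eqOn_Ioo (ha'.trans Ioo_subset_Ioi_self)
      (support_indicator_Ioo_subset_Ioi b _) hsub
      (Eventually.of_forall fun y hy => indicator_of_mem hy _) ht.2.le
  have hD : D =ᵐ[volume] 0 := by
    refine ae_eq_zero_of_add_convolution_eq_zero ha ha' ((hx₁.sub hx₂).indicator
      measurableSet_Ioo) support_indicator_subset ?_
    filter_upwards [h, ha.convolution_sub_ae hx₁ hx₂] with t ht hconv_sub ht'
    rw [hconv t ht', hconv_sub, show D t = (x₁ - x₂) t from indicator_of_mem ht' _]
    simp only [Pi.sub_apply]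
    linarith [ht ht']
  filter_upwards [hD] with t ht ht'
  simpa [D, indicator_of_mem ht', sub_eq_zero] using ht

end Volterra

section Sonine

variable {k K g f : ℝ → ℝ} {b : ℝ}

theorem integral_comp_sub_mul_derivWithin (hg : Differentiable ℝ g)
    (hg' : IntegrableOn (deriv g) (Ioo 0 b)) (hf : ContDiffOn ℝ 1 f (Icc 0 b)) {t : ℝ}
    (ht : t ∈ Ioo 0 b) :
    ∫ s in 0..t, g (t - s) * derivWithin f (Icc 0 b) s
      = g 0 * f t - g t * f 0 + ∫ s in 0..t, deriv g (t - s) * f s := by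
  have hsub : uIcc 0 t ⊆ Icc 0 b := by
    rw [uIcc_of_le ht.1.le]
    exact Icc_subset_Icc_right ht.2.le
  have hg'_int : IntervalIntegrable (fun s => -deriv g (t - s)) volume 0 t := by
    have : IntervalIntegrable (deriv g) volume 0 t :=
      (intervalIntegrable_iff_integrableOn_Ioc_of_le ht.1.le).2
        (hg'.mono_set (Ioc_subset_Ioo_right ht.2))
    have hcomp : IntervalIntegrable (fun s => deriv g (t - s)) volume 0 t := by
      simpa using (this.comp_sub_left t).symm
    exact hcomp.neg
  have hf'_int : IntervalIntegrable (derivWithin f (Icc 0 b)) volume 0 t :=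
    ((hf.continuousOn_derivWithin (uniqueDiffOn_Icc (ht.1.trans ht.2)) le_rfl).mono
      hsub).intervalIntegrable
  have hibp := integral_mul_deriv_eq_deriv_mul_of_hasDerivWithinAt
    (u := fun s => g (t - s)) (v := f)
    (fun s _ => ((hg (t - s)).hasDerivAt.comp_const_sub t s).hasDerivWithinAt)
    (fun s hs => ((hf.differentiableOn one_ne_zero s (hsub hs)).hasDerivWithinAt).mono hsub)
    hg'_int hf'_int
  simp only [sub_self, sub_zero, neg_mul, intervalIntegral.integral_neg] at hibp
  rw [hibp]
  ring

theorem indicator_convolution_eq_of_sonine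
    (hgsc : ∀ᵐ t : ℝ, t ∈ Ioo (0:ℝ) b → (∫ s in (0:ℝ)..t, K (t - s) * k s) = g t) :
    ∀ᵐ t, t ∈ Ioo 0 b → ((Ioo 0 b).indicator k ⋆ (Ioo 0 b).indicator K) t = g t := by
  filter_upwards [hgsc] with t ht htI
  rw [convolution_lsmul_comm, indicator_convolution_indicator_eq_intervalIntegral htI, ht htI]

noncomputable def convolutionDeriv (b : ℝ) (K f : ℝ → ℝ) : ℝ → ℝ :=
  f 0 • (Ioo 0 b).indicator K +
    (Ioo 0 b).indicator K ⋆ (Ioo 0 b).indicator (derivWithin f (Icc 0 b))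

theorem integrable_convolutionDeriv (hK : IntegrableOn K (Ioo 0 b))
    (hf' : IntegrableOn (derivWithin f (Icc 0 b)) (Ioo 0 b)) :
    Integrable (convolutionDeriv b K f) :=
  ((hK.integrable_indicator measurableSet_Ioo).smul (f 0)).add
    ((hK.integrable_indicator measurableSet_Ioo).integrable_convolution (lsmul ℝ ℝ)
      (hf'.integrable_indicator measurableSet_Ioo))

theorem support_convolutionDeriv_subset (b : ℝ) (K f : ℝ → ℝ) :
    support (convolutionDeriv b K f) ⊆ Ioi 0 :=
  (support_add _ _).trans (union_subset ((support_const_smul_subset _ _).trans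
    (support_indicator_Ioo_subset_Ioi b K)) (support_convolution_subset_Ioi
      (support_indicator_Ioo_subset_Ioi b K) (support_indicator_Ioo_subset_Ioi b _)))

theorem indicator_convolution_convolutionDeriv (hk : IntegrableOn k (Ioo 0 b))
    (hK : IntegrableOn K (Ioo 0 b)) (hg : Differentiable ℝ g)
    (hg' : IntegrableOn (deriv g) (Ioo 0 b)) (hg0 : g 0 = 1)
    (hgsc : ∀ᵐ t : ℝ, t ∈ Ioo (0:ℝ) b → (∫ s in (0:ℝ)..t, K (t - s) * k s) = g t)
    (hf : ContDiffOn ℝ 1 f (Icc 0 b))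
    (hf' : IntegrableOn (derivWithin f (Icc 0 b)) (Ioo 0 b)) :
    ∀ᵐ t, t ∈ Ioo 0 b → ((Ioo 0 b).indicator k ⋆ convolutionDeriv b K f) t
      = f t + ((Ioo 0 b).indicator (deriv g) ⋆ (Ioo 0 b).indicator f) t := by
  have hI : MeasurableSet (Ioo (0:ℝ) b) := measurableSet_Ioo
  set k₀ := (Ioo 0 b).indicator k
  set K₀ := (Ioo 0 b).indicator K
  set f'₀ := (Ioo 0 b).indicator (derivWithin f (Icc 0 b))
  have hk₀ : Integrable k₀ := hk.integrable_indicator hI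
  have hK₀ : Integrable K₀ := hK.integrable_indicator hI
  have hf'₀ : Integrable f'₀ := hf'.integrable_indicator hI
  have hsonine := indicator_convolution_eq_of_sonine hgsc
  filter_upwards [hsonine, hk₀.convolution_add_ae (hK₀.smul (f 0))
    (hK₀.integrable_convolution (lsmul ℝ ℝ) hf'₀), hk₀.convolution_assoc_ae hK₀ hf'₀]
    with t hkK hadd hassoc htI
  have hkKf' : (k₀ ⋆ (K₀ ⋆ f'₀)) t = ((Ioo 0 b).indicator g ⋆ f'₀) t := by
    rw [← hassoc]
    refine convolution_congr_left_of_ae_eqOn_Ioo (support_indicator_Ioo_subset_Ioi b _)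
      (support_convolution_subset_Ioi (support_indicator_Ioo_subset_Ioi b _)
        (support_indicator_Ioo_subset_Ioi b _)) (support_indicator_Ioo_subset_Ioi b _) ?_
      htI.2.le
    filter_upwards [hsonine] with s hs hsI
    rw [hs hsI, indicator_of_mem hsI]
  rw [convolutionDeriv, hadd, Pi.add_apply, convolution_smul, Pi.smul_apply, hkK htI, hkKf',
    indicator_convolution_indicator_eq_intervalIntegral htI,
    indicator_convolution_indicator_eq_intervalIntegral htI,
    integral_comp_sub_mul_derivWithin hg hg' hf htI, hg0, smul_eq_mul]
  ring

theorem convolution_add_convolution_eq_of_ae_eqOn {a v y : ℝ → ℝ} (hk : Integrable k)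
    (hk' : support k ⊆ Ioi 0) (ha : Integrable a) (ha' : support a ⊆ Ioi 0) (hv : Integrable v)
    (hv' : support v ⊆ Ioi 0) (hy' : support y ⊆ Ioi 0)
    (h : ∀ᵐ t, t ∈ Ioo 0 b → v t + (a ⋆ v) t = y t) :
    ∀ᵐ t, t ∈ Ioo 0 b → (k ⋆ v) t + (a ⋆ (k ⋆ v)) t = (k ⋆ y) t := by
  have hva' : support (v + a ⋆ v) ⊆ Ioi 0 :=
    (support_add _ _).trans (union_subset hv' (support_convolution_subset_Ioi ha' hv'))
  filter_upwards [hk.convolution_add_ae hv (ha.integrable_convolution (lsmul ℝ ℝ) hv),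
    hk.convolution_assoc_ae ha hv, ha.convolution_assoc_ae hk hv] with t hadd hka hak htI
  rw [convolution_congr_right_of_ae_eqOn_Ioo hk' hy' hva'
      (h.mono fun s hs hsI => (hs hsI).symm) htI.2.le,
    hadd, Pi.add_apply, ← hka, convolution_lsmul_comm k a, hak]

end Sonine

/-- if `k ∈ L¹(0,b)` satisfies the generalized Sonine condition and
`f ∈ C¹[0,b]`, then there exists `u ∈ L¹(0,b)` with `∫₀ᵗ k(t-s) u(s) ds = f t`
for almost all `t ∈ (0,b)`. -/
theorem stmt10 (b : ℝ) (hb : 0 < b) (k K g f : ℝ → ℝ)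
    (hk : IntegrableOn k (Ioo 0 b))
    (hK : IntegrableOn K (Ioo 0 b))
    (hg_diff : Differentiable ℝ g)
    (hg' : IntegrableOn (deriv g) (Ioo 0 b))
    (hg0 : g 0 = 1)
    (hgsc : ∀ᵐ t : ℝ, t ∈ Ioo (0:ℝ) b → (∫ s in (0:ℝ)..t, K (t - s) * k s) = g t)
    (hf : ContDiffOn ℝ 1 f (Icc 0 b)) :
    ∃ u : ℝ → ℝ, IntegrableOn u (Ioo 0 b) ∧
      ∀ᵐ t : ℝ, t ∈ Ioo (0:ℝ) b → (∫ s in (0:ℝ)..t, k (t - s) * u s) = f t := by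
  have hI : MeasurableSet (Ioo (0:ℝ) b) := measurableSet_Ioo
  have hf₀ : Integrable ((Ioo 0 b).indicator f) :=
    (hf.continuousOn.integrableOn_Icc.mono_set Ioo_subset_Icc_self).integrable_indicator hI
  have hf' : IntegrableOn (derivWithin f (Icc 0 b)) (Ioo 0 b) :=
    (hf.continuousOn_derivWithin (uniqueDiffOn_Icc hb) le_rfl).integrableOn_Icc.mono_set
      Ioo_subset_Icc_self
  have ha : Integrable ((Ioo 0 b).indicator (deriv g)) := hg'.integrable_indicator hI
  have hk₀ : Integrable ((Ioo 0 b).indicator k) := hk.integrable_indicator hI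
  obtain ⟨u, hu, hu', hu_eq⟩ := exists_volterra_solution ha support_indicator_subset
    (integrable_convolutionDeriv hK hf')
  have hku := convolution_add_convolution_eq_of_ae_eqOn hk₀
    (support_indicator_Ioo_subset_Ioi b k) ha (support_indicator_Ioo_subset_Ioi b _) hu
    (hu'.trans Ioo_subset_Ioi_self) (support_convolutionDeriv_subset b K f) hu_eq
  have hsol := ae_eqOn_Ioo_of_add_convolution_eq ha support_indicator_subset
    (hk₀.integrable_convolution (lsmul ℝ ℝ) hu) (support_convolution_subset_Ioi
      (support_indicator_Ioo_subset_Ioi b k) (hu'.trans Ioo_subset_Ioi_self))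
    hf₀ (support_indicator_Ioo_subset_Ioi b f) (by
      filter_upwards [hku, indicator_convolution_convolutionDeriv hk hK hg_diff hg' hg0 hgsc hf
        hf'] with t h₁ h₂ htI
      rw [h₁ htI, h₂ htI, indicator_of_mem htI])
  refine ⟨u, hu.integrableOn, ?_⟩
  filter_upwards [hsol] with t ht htI
  rw [← indicator_convolution_indicator_eq_intervalIntegral htI, indicator_eq_self.2 hu', ht htI,
    indicator_of_mem htI]
end

section
/- Let b > 0 and k ∈ L¹(0,b). Then k satisfies the Sonine condition, i.e. there exists K ∈ L¹(0,b) with ∫₀ᵗ K(t−s) k(s) ds = 1 for almost all t ∈ (0,b), if and only if k satisfies the generalized Sonine condition, i.e. there exist K ∈ L¹(0,b) and a differentiable function g with g' ∈ L¹(0,b) and g(0) = 1 such that ∫₀ᵗ K(t−s) k(s) ds = g(t) for almost all t ∈ (0,b). -/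
open MeasureTheory Set Filter intervalIntegral Function
open scoped Convolution ENNReal Topology

noncomputable section SonineAux

/-- multiplication as a bilinear map -/
abbrev mulL : ℝ →L[ℝ] ℝ →L[ℝ] ℝ := ContinuousLinearMap.mul ℝ ℝ

lemma conv_apply (f g : ℝ → ℝ) (t : ℝ) :
    (f ⋆[mulL] g) t = ∫ s, f s * g (t - s) := by
  simp [convolution_def, ContinuousLinearMap.mul_apply']

lemma conv_flip_apply (f g : ℝ → ℝ) (t : ℝ) :
    (f ⋆[mulL] g) t = ∫ s, f (t - s) * g s := by
  rw [conv_apply]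
  have h1 : (∫ s, f s * g (t - s)) = ∫ s, f (-s) * g (t + s) := by
    rw [← integral_neg_eq_self (fun s => f s * g (t - s)) volume]
    congr 1; ext s; rw [sub_neg_eq_add]
  have h2 : (∫ s, f (-s) * g (t + s)) = ∫ s, f (t - s) * g s := by
    have h3 := integral_add_left_eq_self (μ := volume) (fun x => f (t - x) * g x) t
    rw [← h3]
    congr 1; funext s
    rw [show t - (t + s) = -s by ring]
  rw [h1, h2]

lemma conv_meas {f g : ℝ → ℝ} (hf : Measurable f) (hg : Measurable g) :
    Measurable (f ⋆[mulL] g) := by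
  have : StronglyMeasurable fun p : ℝ × ℝ => f p.2 * g (p.1 - p.2) :=
    ((hf.comp measurable_snd).mul (hg.comp (measurable_fst.sub measurable_snd))).stronglyMeasurable
  have h := this.integral_prod_right' (ν := volume)
  have e : (f ⋆[mulL] g) = fun x => ∫ y, f y * g (x - y) := funext (conv_apply f g)
  rw [e]; exact h.measurable

lemma conv_zero_of_nonpos {f g : ℝ → ℝ} (hf : support f ⊆ Ioi 0)
    (hg : support g ⊆ Ioi 0) {x : ℝ} (hx : x ≤ 0) : (f ⋆[mulL] g) x = 0 := by
  by_contra h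
  have hmem : x ∈ support (f ⋆[mulL] g) := h
  have := support_convolution_subset mulL (f := f) (g := g) hmem
  obtain ⟨y, hy, z, hz, rfl⟩ := this
  have hy' := hf hy
  have hz' := hg hz
  simp only [mem_Ioi] at hy' hz'
  change y + z ≤ 0 at hx
  linarith

/-- the iterated convolution powers -/
def iterConv (f : ℝ → ℝ) : ℕ → ℝ → ℝ
  | 0 => f
  | n+1 => f ⋆[mulL] iterConv f n

lemma iterConv_meas {f : ℝ → ℝ} (hf : Measurable f) : ∀ n, Measurable (iterConv f n)
  | 0 => hf
  | (n+1) => conv_meas hf (iterConv_meas hf n)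

lemma iterConv_int {f : ℝ → ℝ} (hf : Integrable f) : ∀ n, Integrable (iterConv f n)
  | 0 => hf
  | (n+1) => hf.integrable_convolution mulL (iterConv_int hf n)

lemma iterConv_supp {f : ℝ → ℝ} (hs : support f ⊆ Ioi 0) :
    ∀ n, support (iterConv f n) ⊆ Ioi 0
  | 0 => hs
  | (n+1) => by
      intro x hx
      obtain ⟨y, hy, z, hz, rfl⟩ := support_convolution_subset mulL
        (f := f) (g := iterConv f n) hx
      have h1 := hs hy
      have h2 := iterConv_supp hs n hz
      simp only [mem_Ioi] at h1 h2 ⊢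
      change 0 < y + z
      linarith

lemma exists_resolvent (b : ℝ) (hb : 0 < b) (f : ℝ → ℝ) (hfm : Measurable f)
    (hf : Integrable f) (hsupp : support f ⊆ Ioo 0 b) :
    ∃ ψ : ℝ → ℝ, Integrable ψ ∧ support ψ ⊆ Ioo 0 b ∧
      ∀ᵐ t, t ∈ Ioo (0:ℝ) b → ψ t + f t + (f ⋆[mulL] ψ) t = 0 := by
  classical
  -- choose the exponential weight
  obtain ⟨l, hl0, hlhalf⟩ :
      ∃ l : ℝ, 0 ≤ l ∧ (∫ t, Real.exp (-(l * t)) * |f t|) ≤ 1 / 2 := by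
    have htend : Tendsto (fun l : ℝ => ∫ t, Real.exp (-(l * t)) * |f t|)
        atTop (nhds 0) := by
      have h0 : (0 : ℝ) = ∫ t : ℝ, (0 : ℝ) := by simp
      rw [h0]
      apply MeasureTheory.tendsto_integral_filter_of_dominated_convergence (fun t => |f t|)
      · exact Eventually.of_forall fun l =>
          ((Real.measurable_exp.comp ((measurable_const.mul measurable_id).neg)).mul
            hfm.abs).aestronglyMeasurable
      · filter_upwards [eventually_ge_atTop (0 : ℝ)] with l hl
        refine Eventually.of_forall fun t => ?_
        by_cases hft : f t = 0
        · simp [hft]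
        · have ht0 : 0 < t := (hsupp hft).1
          have : Real.exp (-(l * t)) ≤ 1 := by
            rw [Real.exp_le_one_iff]
            nlinarith
          rw [Real.norm_eq_abs, abs_mul, abs_of_nonneg (Real.exp_pos _).le, abs_abs]
          nlinarith [abs_nonneg (f t)]
      · exact hf.abs
      · refine Eventually.of_forall fun t => ?_
        by_cases hft : f t = 0
        · simp [hft]
        · have ht0 : 0 < t := (hsupp hft).1
          have : Tendsto (fun l : ℝ => Real.exp (-(l * t))) atTop (nhds 0) := by
            have h1 : Tendsto (fun l : ℝ => l * t) atTop atTop :=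
              Tendsto.atTop_mul_const ht0 tendsto_id
            have h2 : Tendsto (fun l : ℝ => -(l * t)) atTop atBot :=
              tendsto_neg_atBot_iff.mpr h1
            exact (Real.tendsto_exp_atBot.comp h2).congr fun l => rfl
          simpa using this.mul_const |f t|
    have h2 := htend.eventually (eventually_le_nhds (by norm_num : (0:ℝ) < 1/2))
    obtain ⟨l, hl1, hl2⟩ := (h2.and (eventually_ge_atTop (0:ℝ))).exists
    exact ⟨l, hl2, hl1⟩
  set w : ℝ → ℝ := fun t => Real.exp (-(l * t)) with hw_def
  have hw_pos : ∀ t, 0 < w t := fun t => Real.exp_pos _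
  have hw_le_one : ∀ t, 0 < t → w t ≤ 1 := by
    intro t ht
    rw [hw_def]; simp only
    rw [Real.exp_le_one_iff]; nlinarith
  have hw_mul : ∀ s t : ℝ, w s * w (t - s) = w t := by
    intro s t
    rw [hw_def]; simp only [← Real.exp_add]
    congr 1; ring
  set F : ℕ → ℝ → ℝ := iterConv f with hF_def
  have hFm : ∀ n, Measurable (F n) := iterConv_meas hfm
  have hFi : ∀ n, Integrable (F n) := iterConv_int hf
  have hFsupp : ∀ n, support (F n) ⊆ Ioi 0 :=
    iterConv_supp (fun x hx => (hsupp hx).1)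
  have hFsucc : ∀ n, F (n + 1) = f ⋆[mulL] F n := fun n => rfl
  -- weighted L¹ norms
  set W : ℕ → ℝ := fun n => ∫ t, w t * |F n t| with hW_def
  have hwFi : ∀ n, Integrable fun t => w t * |F n t| := by
    intro n
    refine (hFi n).abs.mono'
      (((Real.measurable_exp.comp ((measurable_const.mul measurable_id).neg)).mul
        (hFm n).abs).aestronglyMeasurable) ?_
    refine Eventually.of_forall fun t => ?_
    rw [Real.norm_eq_abs, abs_mul, abs_of_nonneg (hw_pos t).le, abs_abs]
    by_cases hft : F n t = 0
    · simp [hft]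
    · have ht0 : 0 < t := hFsupp n hft
      nlinarith [abs_nonneg (F n t), hw_le_one t ht0]
  have hWnonneg : ∀ n, 0 ≤ W n := fun n =>
    integral_nonneg fun t => mul_nonneg (hw_pos t).le (abs_nonneg _)
  have hW0 : W 0 ≤ 1 / 2 := hlhalf
  have hWrec : ∀ n, W (n + 1) ≤ W 0 * W n := by
    intro n
    have hkey : ∀ᵐ t : ℝ, w t * |F (n+1) t| ≤
        ((fun s => w s * |F 0 s|) ⋆[mulL] (fun s => w s * |F n s|)) t := by
      refine Eventually.of_forall fun t => ?_
      have e1 : F (n+1) t = ∫ s, f s * F n (t - s) := by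
        rw [hFsucc n, conv_apply]
      have e2 : |F (n+1) t| ≤ ∫ s, |f s * F n (t - s)| := by
        rw [e1]
        have h := MeasureTheory.norm_integral_le_integral_norm
          (μ := volume) (fun s => f s * F n (t - s))
        simpa only [Real.norm_eq_abs] using h
      calc w t * |F (n+1) t| ≤ w t * ∫ s, |f s * F n (t - s)| :=
            mul_le_mul_of_nonneg_left e2 (hw_pos t).le
      _ = ∫ s, w t * |f s * F n (t - s)| := (MeasureTheory.integral_const_mul _ _).symm
      _ = ∫ s, (w s * |F 0 s|) * (w (t - s) * |F n (t - s)|) := by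
          congr 1; funext s
          have : F 0 s = f s := rfl
          rw [this, abs_mul, ← hw_mul s t]; ring
      _ = ((fun s => w s * |F 0 s|) ⋆[mulL] (fun s => w s * |F n s|)) t := by
          rw [conv_apply]
    calc W (n+1) = ∫ t, w t * |F (n+1) t| := rfl
    _ ≤ ∫ t, ((fun s => w s * |F 0 s|) ⋆[mulL] (fun s => w s * |F n s|)) t :=
        integral_mono_ae (hwFi (n+1))
          (Integrable.integrable_convolution mulL (hwFi 0) (hwFi n)) hkey
    _ = W 0 * W n := by
        rw [integral_convolution]
        · simp [ContinuousLinearMap.mul_apply']; rfl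
        · exact hwFi 0
        · exact hwFi n
  have hWn : ∀ n, W n ≤ (1/2)^(n+1) := by
    intro n
    induction n with
    | zero => simpa using hW0
    | succ m ih =>
      calc W (m+1) ≤ W 0 * W m := hWrec m
      _ ≤ (1/2) * (1/2)^(m+1) := by
          apply mul_le_mul hW0 ih (hWnonneg m)
          norm_num
      _ = (1/2)^(m+2) := by ring
  -- L¹ bounds on (0, b)
  have hFb : ∀ n, ∫ t in Ioo 0 b, |F n t| ≤ Real.exp (l * b) * (1/2)^(n+1) := by
    intro n
    have h1 : ∫ t in Ioo 0 b, |F n t| ≤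
        ∫ t in Ioo 0 b, Real.exp (l * b) * (w t * |F n t|) := by
      apply setIntegral_mono_on ((hFi n).abs.integrableOn)
        (((hwFi n).const_mul _).integrableOn) measurableSet_Ioo
      intro t ht
      have h2 : Real.exp (l * t) ≤ Real.exp (l * b) := by
        rw [Real.exp_le_exp]
        nlinarith [ht.1, ht.2]
      have h3 : Real.exp (l * t) * w t = 1 := by
        rw [hw_def]; simp only [← Real.exp_add]
        rw [show l * t + -(l * t) = 0 by ring, Real.exp_zero]
      nlinarith [abs_nonneg (F n t), hw_pos t, Real.exp_pos (l * t),
        mul_le_mul_of_nonneg_right h2 (mul_nonneg (hw_pos t).le (abs_nonneg (F n t)))]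
    calc ∫ t in Ioo 0 b, |F n t| ≤ ∫ t in Ioo 0 b, Real.exp (l * b) * (w t * |F n t|) := h1
    _ = Real.exp (l * b) * ∫ t in Ioo 0 b, w t * |F n t| := by
        rw [MeasureTheory.integral_const_mul]
    _ ≤ Real.exp (l * b) * W n := by
        apply mul_le_mul_of_nonneg_left _ (Real.exp_pos _).le
        exact setIntegral_le_integral (hwFi n)
          (Eventually.of_forall fun t => mul_nonneg (hw_pos t).le (abs_nonneg _))
    _ ≤ Real.exp (l * b) * (1/2)^(n+1) :=
        mul_le_mul_of_nonneg_left (hWn n) (Real.exp_pos _).le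
  have measurable_w : Measurable w :=
    Real.measurable_exp.comp ((measurable_const.mul measurable_id).neg)
  -- the summable majorant
  set r : ℕ → ℝ := fun n => Real.exp (l * b) * (1/2)^(n+1) with hr_def
  have hrs : Summable r := by
    have h : Summable (fun n : ℕ => ((1:ℝ)/2)^(n+1)) := by
      simpa [pow_succ] using summable_geometric_two.mul_right (1/2 : ℝ)
    exact h.mul_left _
  have hrnn : ∀ n, 0 ≤ r n := fun n => by positivity
  -- the signed, truncated iterates
  set Gb : ℕ → ℝ → ℝ :=
    fun n => (Ioo (0:ℝ) b).indicator (fun x => (-1:ℝ)^(n+1) * F n x) with hGb_def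
  have hGbm : ∀ n, Measurable (Gb n) := fun n =>
    (measurable_const.mul (hFm n)).indicator measurableSet_Ioo
  have hGbi : ∀ n, Integrable (Gb n) := fun n =>
    ((hFi n).const_mul _).indicator measurableSet_Ioo
  have hGb_le : ∀ n x, |Gb n x| ≤ |F n x| := by
    intro n x
    by_cases hx : x ∈ Ioo (0:ℝ) b
    · rw [hGb_def]; simp only [indicator_of_mem hx]
      rw [abs_mul, abs_pow, abs_neg, abs_one, one_pow, one_mul]
    · rw [hGb_def]; simp [indicator_of_notMem hx, abs_nonneg]
  have hGbnorm : ∀ n, ∫ x, ‖Gb n x‖ ≤ r n := by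
    intro n
    have h1 : (fun x => ‖Gb n x‖) =
        (Ioo (0:ℝ) b).indicator fun x => ‖(-1:ℝ)^(n+1) * F n x‖ := by
      funext x
      rw [hGb_def, norm_indicator_eq_indicator_norm]
    calc ∫ x, ‖Gb n x‖ = ∫ x in Ioo 0 b, ‖(-1:ℝ)^(n+1) * F n x‖ := by
          rw [h1, MeasureTheory.integral_indicator measurableSet_Ioo]
    _ = ∫ x in Ioo 0 b, |F n x| := by
          congr 1; funext x
          rw [Real.norm_eq_abs, abs_mul, abs_pow, abs_neg, abs_one, one_pow, one_mul]
    _ ≤ r n := hFb n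
  have hGlint : ∀ n, (∫⁻ x, ‖Gb n x‖₊) ≤ ENNReal.ofReal (r n) := by
    intro n
    rw [show (∫⁻ x, (‖Gb n x‖₊ : ℝ≥0∞)) = ∫⁻ x, ‖Gb n x‖ₑ from rfl,
      ← ofReal_integral_norm_eq_lintegral_enorm (hGbi n)]
    exact ENNReal.ofReal_le_ofReal (hGbnorm n)
  have hGsum : (∑' n, ∫⁻ x, (‖Gb n x‖₊ : ℝ≥0∞)) ≠ ⊤ := by
    refine ne_top_of_le_ne_top ?_ (ENNReal.tsum_le_tsum hGlint)
    rw [← ENNReal.ofReal_tsum_of_nonneg hrnn hrs]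
    exact ENNReal.ofReal_ne_top
  -- a.e. summability of the series of iterates
  have hsumae : ∀ᵐ x : ℝ, Summable fun n => |F n x| := by
    have hwFnorm : ∀ n, (∫⁻ x, ‖w x * |F n x|‖₊) = ENNReal.ofReal (W n) := by
      intro n
      have hWe : (∫ x, ‖w x * |F n x|‖) = W n :=
        integral_congr_ae (Eventually.of_forall fun x => by
          show ‖w x * |F n x|‖ = w x * |F n x|
          rw [Real.norm_eq_abs, abs_of_nonneg (mul_nonneg (hw_pos x).le (abs_nonneg _))])
      rw [show (∫⁻ x, (‖w x * |F n x|‖₊ : ℝ≥0∞)) = ∫⁻ x, ‖w x * |F n x|‖ₑ from rfl,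
        ← ofReal_integral_norm_eq_lintegral_enorm (hwFi n), hWe]
    have hmeasn : ∀ n : ℕ, Measurable fun x => (‖w x * |F n x|‖₊ : ℝ≥0∞) := fun n =>
      (measurable_w.mul (hFm n).abs).enorm
    have h2 : (∫⁻ x, ∑' n, (‖w x * |F n x|‖₊ : ℝ≥0∞)) ≠ ⊤ := by
      rw [lintegral_tsum fun n => (hmeasn n).aemeasurable]
      have hle : ∀ n, (∫⁻ x, ‖w x * |F n x|‖₊) ≤ ENNReal.ofReal ((1/2)^(n+1)) := by
        intro n
        rw [hwFnorm n]
        exact ENNReal.ofReal_le_ofReal (hWn n)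
      refine ne_top_of_le_ne_top ?_ (ENNReal.tsum_le_tsum hle)
      have hgs : Summable (fun n : ℕ => ((1:ℝ)/2)^(n+1)) := by
        simpa [pow_succ] using summable_geometric_two.mul_right (1/2 : ℝ)
      rw [← ENNReal.ofReal_tsum_of_nonneg (fun n => by positivity) hgs]
      exact ENNReal.ofReal_ne_top
    filter_upwards [ae_lt_top' (Measurable.ennreal_tsum hmeasn).aemeasurable h2] with x hx
    have hx' : Summable fun n => ‖w x * |F n x|‖₊ := by
      rw [← ENNReal.tsum_coe_ne_top_iff_summable]
      exact hx.ne
    have hx'' : Summable fun n => w x * |F n x| := by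
      have h3 := NNReal.summable_coe.mpr hx'
      refine h3.congr fun n => ?_
      rw [coe_nnnorm, Real.norm_eq_abs,
        abs_of_nonneg (mul_nonneg (hw_pos x).le (abs_nonneg _))]
    have h4 := hx''.mul_left (w x)⁻¹
    refine h4.congr fun n => ?_
    rw [← mul_assoc, inv_mul_cancel₀ (hw_pos x).ne', one_mul]
  -- the resolvent kernel
  set ψ : ℝ → ℝ := fun x => ∑' n, Gb n x with hψ_def
  have hψsupp : support ψ ⊆ Ioo 0 b := by
    refine support_subset_iff'.mpr fun x hx => ?_
    have h0 : ∀ n, Gb n x = 0 := fun n => indicator_of_notMem hx _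
    rw [hψ_def]; simp only [h0]; exact tsum_zero
  have hGbsummable : ∀ x, Summable (fun n => |F n x|) → Summable fun n => Gb n x := by
    intro x hx
    refine Summable.of_norm (Summable.of_nonneg_of_le (fun n => norm_nonneg _)
      (fun n => ?_) hx)
    rw [Real.norm_eq_abs]; exact hGb_le n x
  have hψm : AEStronglyMeasurable ψ volume := by
    apply aestronglyMeasurable_of_tendsto_ae (u := atTop)
      (f := fun m : ℕ => fun x => ∑ n ∈ Finset.range m, Gb n x)
    · intro m
      exact (Finset.measurable_sum _ fun n _ => hGbm n).aestronglyMeasurable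
    · filter_upwards [hsumae] with x hx
      exact ((hGbsummable x hx).hasSum).tendsto_sum_nat
  have hψi : Integrable ψ := by
    refine ⟨hψm, ?_⟩
    have hb1 : ∀ᵐ x : ℝ, (‖ψ x‖₊ : ℝ≥0∞) ≤ ∑' n, (‖Gb n x‖₊ : ℝ≥0∞) := by
      filter_upwards [hsumae] with x hx
      have hns : Summable fun n => ‖Gb n x‖ :=
        Summable.of_nonneg_of_le (fun n => norm_nonneg _)
          (fun n => by rw [Real.norm_eq_abs]; exact hGb_le n x) hx
      calc (‖ψ x‖₊ : ℝ≥0∞) = ENNReal.ofReal ‖ψ x‖ := (ofReal_norm _).symm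
      _ ≤ ENNReal.ofReal (∑' n, ‖Gb n x‖) :=
          ENNReal.ofReal_le_ofReal (by rw [hψ_def]; exact norm_tsum_le_tsum_norm hns)
      _ = ∑' n, ENNReal.ofReal ‖Gb n x‖ :=
          ENNReal.ofReal_tsum_of_nonneg (fun n => norm_nonneg _) hns
      _ = ∑' n, (‖Gb n x‖₊ : ℝ≥0∞) := tsum_congr fun n => ofReal_norm _
    rw [hasFiniteIntegral_def]
    calc ∫⁻ x, (‖ψ x‖₊ : ℝ≥0∞) ≤ ∫⁻ x, ∑' n, (‖Gb n x‖₊ : ℝ≥0∞) := lintegral_mono_ae hb1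
    _ = ∑' n, ∫⁻ x, (‖Gb n x‖₊ : ℝ≥0∞) :=
        lintegral_tsum fun n => (hGbm n).enorm.aemeasurable
    _ < ⊤ := hGsum.lt_top
  -- interchanging convolution and summation
  have hΘmeas : ∀ n : ℕ, Measurable fun t => ∫⁻ s, (‖f s * Gb n (t - s)‖₊ : ℝ≥0∞) := by
    intro n
    have hm : Measurable fun p : ℝ × ℝ => (‖f p.2 * Gb n (p.1 - p.2)‖₊ : ℝ≥0∞) :=
      ((hfm.comp measurable_snd).mul
        ((hGbm n).comp (measurable_fst.sub measurable_snd))).enorm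
    exact hm.lintegral_prod_right'
  have hΘbound : ∀ n, (∫⁻ t, ∫⁻ s, (‖f s * Gb n (t - s)‖₊ : ℝ≥0∞)) ≤
      (∫⁻ s, (‖f s‖₊ : ℝ≥0∞)) * ENNReal.ofReal (r n) := by
    intro n
    rw [lintegral_lintegral_swap]
    · calc (∫⁻ s, ∫⁻ t, (‖f s * Gb n (t - s)‖₊ : ℝ≥0∞))
          = ∫⁻ s, (‖f s‖₊ : ℝ≥0∞) * ∫⁻ t, (‖Gb n (t - s)‖₊ : ℝ≥0∞) := by
            refine lintegral_congr fun s => ?_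
            simp_rw [nnnorm_mul, ENNReal.coe_mul]
            have hmGb : Measurable fun t : ℝ => (‖Gb n (t - s)‖₊ : ℝ≥0∞) :=
              ((hGbm n).comp (measurable_id.sub_const s)).enorm
            rw [lintegral_const_mul _ hmGb]
      _ = ∫⁻ s, (‖f s‖₊ : ℝ≥0∞) * ∫⁻ t, (‖Gb n t‖₊ : ℝ≥0∞) := by
            refine lintegral_congr fun s => ?_
            congr 1
            exact lintegral_sub_right_eq_self (fun t => (‖Gb n t‖₊ : ℝ≥0∞)) s
      _ = (∫⁻ s, (‖f s‖₊ : ℝ≥0∞)) * ∫⁻ t, (‖Gb n t‖₊ : ℝ≥0∞) :=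
            lintegral_mul_const _ hfm.enorm
      _ ≤ (∫⁻ s, (‖f s‖₊ : ℝ≥0∞)) * ENNReal.ofReal (r n) :=
            mul_le_mul_right (hGlint n) _
    · exact (((hfm.comp measurable_snd).mul
        ((hGbm n).comp (measurable_fst.sub measurable_snd))).enorm).aemeasurable
  have hΘfin : ∀ᵐ t : ℝ, (∑' n, ∫⁻ s, (‖f s * Gb n (t - s)‖₊ : ℝ≥0∞)) ≠ ⊤ := by
    have h2 : (∫⁻ t, ∑' n, ∫⁻ s, (‖f s * Gb n (t - s)‖₊ : ℝ≥0∞)) ≠ ⊤ := by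
      rw [lintegral_tsum fun n => (hΘmeas n).aemeasurable]
      refine ne_top_of_le_ne_top ?_ (ENNReal.tsum_le_tsum hΘbound)
      rw [ENNReal.tsum_mul_left, ← ENNReal.ofReal_tsum_of_nonneg hrnn hrs]
      exact ENNReal.mul_ne_top
        ((hf.2 : (∫⁻ s, (‖f s‖₊ : ℝ≥0∞)) < ⊤)).ne ENNReal.ofReal_ne_top
    filter_upwards [ae_lt_top' (Measurable.ennreal_tsum hΘmeas).aemeasurable h2] with t ht
    exact ht.ne
  have hconv_tsum : ∀ᵐ t : ℝ, (f ⋆[mulL] ψ) t = ∑' n, (f ⋆[mulL] Gb n) t := by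
    filter_upwards [hΘfin] with t hΘ
    have h1 : (f ⋆[mulL] ψ) t = ∫ s, ∑' n, f s * Gb n (t - s) := by
      rw [conv_apply]
      refine integral_congr_ae (Eventually.of_forall fun s => ?_)
      rw [hψ_def]
      exact tsum_mul_left.symm
    have haesm : ∀ n : ℕ, AEStronglyMeasurable (fun s => f s * Gb n (t - s)) volume :=
      fun n =>
        (hfm.mul ((hGbm n).comp (measurable_const.sub measurable_id))).aestronglyMeasurable
    rw [h1, integral_tsum haesm hΘ]
    exact tsum_congr fun n => (conv_apply f (Gb n) t).symm
  refine ⟨ψ, hψi, hψsupp, ?_⟩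
  filter_upwards [hconv_tsum, hsumae] with t hct hst ht
  have hconvGb : ∀ n, (f ⋆[mulL] Gb n) t = (-1:ℝ)^(n+1) * F (n+1) t := by
    intro n
    have hpt : ∀ s : ℝ, f s * Gb n (t - s) = (-1:ℝ)^(n+1) * (f s * F n (t - s)) := by
      intro s
      by_cases hmem : t - s ∈ Ioo (0:ℝ) b
      · rw [hGb_def]; simp only [indicator_of_mem hmem]; ring
      · rw [hGb_def]; simp only [indicator_of_notMem hmem, mul_zero]
        by_cases hfs : f s = 0
        · simp [hfs]
        · by_cases hFn : F n (t - s) = 0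
          · simp [hFn]
          · exfalso
            have h1 : (0:ℝ) < t - s := hFsupp n hFn
            have h2 := hsupp hfs
            have h3 : ¬ (t - s < b) := fun hlt => hmem ⟨h1, hlt⟩
            push_neg at h3
            have ht2 := ht.2
            have hs1 := h2.1
            linarith
    calc (f ⋆[mulL] Gb n) t = ∫ s, f s * Gb n (t - s) := conv_apply f (Gb n) t
    _ = ∫ s, (-1:ℝ)^(n+1) * (f s * F n (t - s)) :=
        integral_congr_ae (Eventually.of_forall hpt)
    _ = (-1:ℝ)^(n+1) * ∫ s, f s * F n (t - s) := MeasureTheory.integral_const_mul _ _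
    _ = (-1:ℝ)^(n+1) * F (n+1) t := by rw [← conv_apply, ← hFsucc]
  have hψt : ψ t = ∑' n, (-1:ℝ)^(n+1) * F n t := by
    rw [hψ_def]
    exact tsum_congr fun n => by simp only [hGb_def]; exact indicator_of_mem ht _
  have hsml : Summable fun n => (-1:ℝ)^(n+1) * F n t := by
    refine Summable.of_norm (hst.congr fun n => ?_)
    rw [Real.norm_eq_abs, abs_mul, abs_pow, abs_neg, abs_one, one_pow, one_mul]
  have hX : (f ⋆[mulL] ψ) t = ∑' n, (-1:ℝ)^(n+1) * F (n+1) t := by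
    rw [hct]
    exact tsum_congr hconvGb
  have hshift : ψ t = -F 0 t - ∑' n, (-1:ℝ)^(n+1) * F (n+1) t := by
    rw [hψt, hsml.tsum_eq_zero_add]
    have h5 : ∑' n : ℕ, (-1:ℝ)^(n+1+1) * F (n+1) t
        = - ∑' n : ℕ, (-1:ℝ)^(n+1) * F (n+1) t := by
      rw [← tsum_neg]
      exact tsum_congr fun n => by ring
    rw [h5]
    norm_num
    ring
  rw [hX, hshift]
  have : F 0 t = f t := rfl
  rw [this]
  ring

end SonineAux

/-- equivalence of SC and gSC: `k ∈ L¹(0,b)` satisfies the Sonine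
condition (`∃ K ∈ L¹(0,b)` with `∫₀ᵗ K(t-s) k(s) ds = 1` a.e. on `(0,b)`) iff it
satisfies the generalized Sonine condition (`∃ K ∈ L¹(0,b)` and a differentiable
`g` with `g' ∈ L¹(0,b)`, `g 0 = 1`, and `∫₀ᵗ K(t-s) k(s) ds = g t` a.e. on `(0,b)`). -/
theorem stmt13 (b : ℝ) (hb : 0 < b) (k : ℝ → ℝ)
    (hk : IntegrableOn k (Ioo 0 b)) :
    (∃ K : ℝ → ℝ, IntegrableOn K (Ioo 0 b) ∧
      ∀ᵐ t : ℝ, t ∈ Ioo (0:ℝ) b → (∫ s in (0:ℝ)..t, K (t - s) * k s) = 1) ↔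
    (∃ K g : ℝ → ℝ, IntegrableOn K (Ioo 0 b) ∧
      Differentiable ℝ g ∧ IntegrableOn (deriv g) (Ioo 0 b) ∧ g 0 = 1 ∧
      ∀ᵐ t : ℝ, t ∈ Ioo (0:ℝ) b → (∫ s in (0:ℝ)..t, K (t - s) * k s) = g t) := by
  constructor
  · rintro ⟨K, hK, hae⟩
    exact ⟨K, fun _ => 1, hK, differentiable_const 1, by
      simp only [deriv_const']
      exact integrableOn_zero, rfl, hae⟩
  · rintro ⟨K, g, hK, hg, hg', hg0, hae⟩
    classical
    set kb : ℝ → ℝ := (Ioo (0:ℝ) b).indicator k with hkb_def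
    have hkbi : Integrable kb := hk.integrable_indicator measurableSet_Ioo
    set Kb : ℝ → ℝ := (Ioo (0:ℝ) b).indicator K with hKb_def
    have hKbi : Integrable Kb := hK.integrable_indicator measurableSet_Ioo
    set fd : ℝ → ℝ := (Ioo (0:ℝ) b).indicator (deriv g) with hfd_def
    have hfdm : Measurable fd := (measurable_deriv g).indicator measurableSet_Ioo
    have hfdi : Integrable fd := hg'.integrable_indicator measurableSet_Ioo
    have hfd_supp : support fd ⊆ Ioo 0 b := support_indicator_subset
    have hfd0 : ∀ x ≤ (0:ℝ), fd x = 0 := by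
      intro x hx
      rw [hfd_def]
      exact indicator_of_notMem (fun hm => absurd hm.1 (not_lt.mpr hx)) _
    obtain ⟨ψ, hψi, hψsupp, hres⟩ := exists_resolvent b hb fd hfdm hfdi hfd_supp
    have hψsupp' : support ψ ⊆ Ioi 0 := fun x hx => (hψsupp hx).1
    have hKb_supp : support Kb ⊆ Ioo 0 b := support_indicator_subset
    have hKb_supp' : support Kb ⊆ Ioi 0 := fun x hx => (hKb_supp hx).1
    have hkb_supp : support kb ⊆ Ioo 0 b := support_indicator_subset
    have hkb_supp' : support kb ⊆ Ioi 0 := fun x hx => (hkb_supp hx).1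
    have hconvKbz : ∀ x ≤ (0:ℝ), (ψ ⋆[mulL] Kb) x = 0 := fun x hx =>
      conv_zero_of_nonpos hψsupp' hKb_supp' hx
    have hKbkbz : ∀ x ≤ (0:ℝ), (Kb ⋆[mulL] kb) x = 0 := fun x hx =>
      conv_zero_of_nonpos hKb_supp' hkb_supp' hx
    -- the primitive of fd
    set Φ : ℝ → ℝ := fun x => ∫ v in (0:ℝ)..x, fd v with hΦ_def
    have hfd_ii : ∀ a c : ℝ, IntervalIntegrable fd volume a c := fun a c =>
      hfdi.intervalIntegrable
    have hΦ0 : ∀ x ≤ (0:ℝ), Φ x = 0 := by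
      intro x hx
      rw [hΦ_def]
      simp only
      rw [intervalIntegral.integral_symm, intervalIntegral.integral_of_le hx]
      rw [setIntegral_eq_zero_of_forall_eq_zero fun v hv => hfd0 v hv.2, neg_zero]
    have hΦIoo : ∀ x : ℝ, Φ x = ∫ v in Ioo 0 x, fd v := by
      intro x
      rcases le_or_gt x 0 with hx | hx
      · rw [hΦ0 x hx, Ioo_eq_empty (by intro h; exact absurd (h.trans_le hx) (lt_irrefl 0))]
        simp
      · rw [hΦ_def]
        simp only
        rw [intervalIntegral.integral_of_le hx.le, integral_Ioc_eq_integral_Ioo]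
    have hΦcont : Continuous Φ := intervalIntegral.continuous_primitive hfd_ii 0
    set M : ℝ := ∫ v, ‖fd v‖ with hM_def
    have hΦbd : ∀ x, ‖Φ x‖ ≤ M := by
      intro x
      have h1 := intervalIntegral.norm_integral_le_integral_norm_uIoc
        (a := (0:ℝ)) (b := x) (f := fd) (μ := volume)
      have h2 : (∫ u in uIoc (0:ℝ) x, ‖fd u‖) ≤ M :=
        setIntegral_le_integral hfdi.norm (Eventually.of_forall fun v => norm_nonneg _)
      exact le_trans h1 h2
    have hgΦ : ∀ x ∈ Ioo (0:ℝ) b, g x = 1 + Φ x := by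
      intro x hx
      have hsub : Ioc (0:ℝ) x ⊆ Ioo 0 b := fun u hu => ⟨hu.1, lt_of_le_of_lt hu.2 hx.2⟩
      have hii : IntervalIntegrable (deriv g) volume 0 x := by
        rw [intervalIntegrable_iff, uIoc_of_le hx.1.le]
        exact hg'.mono_set hsub
      have hftc : ∫ u in (0:ℝ)..x, deriv g u = g x - g 0 :=
        intervalIntegral.integral_eq_sub_of_hasDerivAt
          (fun u _ => (hg u).hasDerivAt) hii
      have heq : ∫ u in (0:ℝ)..x, deriv g u = Φ x := by
        rw [hΦ_def]
        refine intervalIntegral.integral_congr_ae ?_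
        refine Eventually.of_forall fun u hu => ?_
        rw [uIoc_of_le hx.1.le] at hu
        rw [hfd_def]
        exact (indicator_of_mem (hsub hu) _).symm
      rw [hg0] at hftc
      rw [← heq, hftc] at *
      linarith [hftc]
    -- Fubini step
    have hC : ∀ t ∈ Ioo (0:ℝ) b,
        (∫ s in Ioo 0 t, (fd ⋆[mulL] ψ) s) = ∫ v, ψ v * Φ (t - v) := by
      intro t ht
      have hflip : ∀ s, (fd ⋆[mulL] ψ) s = ∫ v, ψ v * fd (s - v) := by
        intro s
        rw [conv_flip_apply]
        exact integral_congr_ae (Eventually.of_forall fun v => mul_comm _ _)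
      have hprod : Integrable (fun p : ℝ × ℝ => ψ p.2 * fd (p.1 - p.2))
          ((volume.restrict (Ioo 0 t)).prod volume) := by
        have h1 : Integrable (fun p : ℝ × ℝ => ψ p.2 * fd (p.1 - p.2))
            ((volume : Measure ℝ).prod volume) := by
          have h0 := hψi.convolution_integrand mulL hfdi
          simpa [ContinuousLinearMap.mul_apply'] using h0
        have h2 : (volume.restrict (Ioo 0 t)).prod (volume : Measure ℝ)
            = ((volume : Measure ℝ).prod volume).restrict ((Ioo 0 t) ×ˢ univ) := by
          rw [← Measure.prod_restrict, Measure.restrict_univ]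
        rw [h2]
        exact h1.restrict
      calc (∫ s in Ioo 0 t, (fd ⋆[mulL] ψ) s)
          = ∫ s in Ioo 0 t, ∫ v, ψ v * fd (s - v) :=
            integral_congr_ae (Eventually.of_forall fun s => hflip s)
      _ = ∫ v, ∫ s in Ioo 0 t, ψ v * fd (s - v) := integral_integral_swap hprod
      _ = ∫ v, ψ v * ∫ s in Ioo 0 t, fd (s - v) := by
            refine integral_congr_ae (Eventually.of_forall fun v => ?_)
            exact MeasureTheory.integral_const_mul _ _
      _ = ∫ v, ψ v * Φ (t - v) := by
            refine integral_congr_ae (Eventually.of_forall fun v => ?_)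
            beta_reduce
            by_cases hv : ψ v = 0
            · rw [hv, zero_mul, zero_mul]
            · have hv' : v ∈ Ioo (0:ℝ) b := hψsupp (mem_support.mpr hv)
              congr 1
              have h3 : (Ioo (0:ℝ) t).indicator (fun s => fd (s - v))
                  = fun s => (Ioo (0 - v) (t - v)).indicator fd (s - v) := by
                funext s
                by_cases hs : s ∈ Ioo (0:ℝ) t
                · rw [indicator_of_mem hs, indicator_of_mem
                    (show s - v ∈ Ioo (0 - v) (t - v) from
                      ⟨by linarith [hs.1], by linarith [hs.2]⟩)]
                · rw [indicator_of_notMem hs, indicator_of_notMem]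
                  intro hmem
                  exact hs ⟨by linarith [hmem.1], by linarith [hmem.2]⟩
              have e1 : (∫ s in Ioo 0 t, fd (s - v)) = ∫ x in Ioo (0 - v) (t - v), fd x := by
                rw [← MeasureTheory.integral_indicator measurableSet_Ioo, h3,
                  integral_sub_right_eq_self ((Ioo (0 - v) (t - v)).indicator fd) v,
                  MeasureTheory.integral_indicator measurableSet_Ioo]
              have h4 : (Ioo (0 - v) (t - v)).indicator fd
                  = (Ioo (0:ℝ) (t - v)).indicator fd := by
                funext x
                by_cases hx : x ∈ Ioo (0:ℝ) (t - v)
                · rw [indicator_of_mem hx, indicator_of_mem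
                    (show x ∈ Ioo (0 - v) (t - v) from ⟨by linarith [hx.1, hv'.1], hx.2⟩)]
                · by_cases hx2 : x ∈ Ioo (0 - v) (t - v)
                  · have hx0 : x ≤ 0 := by
                      by_contra h
                      exact hx ⟨lt_of_not_ge h, hx2.2⟩
                    rw [indicator_of_mem hx2, indicator_of_notMem hx, hfd0 x hx0]
                  · rw [indicator_of_notMem hx, indicator_of_notMem hx2]
              rw [e1, ← MeasureTheory.integral_indicator measurableSet_Ioo, h4,
                MeasureTheory.integral_indicator measurableSet_Ioo, ← hΦIoo]
    -- a.e. identities for the convolution with kb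
    have hKbkb_eq : ∀ t ∈ Ioo (0:ℝ) b,
        (Kb ⋆[mulL] kb) t = ∫ s in (0:ℝ)..t, K (t - s) * k s := by
      intro t ht
      rw [conv_flip_apply]
      have hpt : (fun s => Kb (t - s) * kb s)
          = (Ioo (0:ℝ) t).indicator (fun s => K (t - s) * k s) := by
        funext s
        by_cases hs : s ∈ Ioo (0:ℝ) t
        · rw [indicator_of_mem hs, hKb_def, hkb_def]
          rw [indicator_of_mem (show t - s ∈ Ioo (0:ℝ) b from
              ⟨by linarith [hs.2], by linarith [hs.1, ht.2]⟩),
            indicator_of_mem (show s ∈ Ioo (0:ℝ) b from ⟨hs.1, by linarith [ht.2, hs.2]⟩)]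
        · rw [indicator_of_notMem hs]
          by_cases hs2 : s ∈ Ioo (0:ℝ) b
          · have h2 : t - s ≤ 0 := by
              by_contra h
              exact hs ⟨hs2.1, by linarith [lt_of_not_ge h]⟩
            rw [hKb_def, indicator_of_notMem
              (fun hm => absurd hm.1 (not_lt.mpr h2)), zero_mul]
          · rw [hkb_def, indicator_of_notMem hs2, mul_zero]
      rw [hpt, MeasureTheory.integral_indicator measurableSet_Ioo,
        ← integral_Ioc_eq_integral_Ioo, ← intervalIntegral.integral_of_le ht.1.le]
    have ae2 : ∀ᵐ t, t ∈ Ioo (0:ℝ) b → (Kb ⋆[mulL] kb) t = g t := by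
      filter_upwards [hae] with t h ht
      rw [hKbkb_eq t ht, h ht]
    set q : ℝ → ℝ := fun x => if x ∈ Ioo (0:ℝ) b then g x else (Kb ⋆[mulL] kb) x
      with hq_def
    have hqae : (Kb ⋆[mulL] kb) =ᵐ[volume] q := by
      filter_upwards [ae2] with x hx
      by_cases hmem : x ∈ Ioo (0:ℝ) b
      · rw [hq_def]; simp only [if_pos hmem]; exact hx hmem
      · rw [hq_def]; simp only [if_neg hmem]
    have hconv_q : ψ ⋆[mulL] (Kb ⋆[mulL] kb) = ψ ⋆[mulL] q :=
      convolution_congr mulL (EventuallyEq.refl _ _) hqae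
    have hassoc : ∀ᵐ t : ℝ,
        ((ψ ⋆[mulL] Kb) ⋆[mulL] kb) t = (ψ ⋆[mulL] (Kb ⋆[mulL] kb)) t := by
      filter_upwards [Integrable.ae_convolution_exists mulL hψi.norm
        (hKbi.norm.integrable_convolution mulL hkbi.norm)] with t ht
      exact convolution_assoc mulL mulL mulL mulL (fun x y z => mul_assoc x y z)
        hψi.aestronglyMeasurable hKbi.aestronglyMeasurable hkbi.aestronglyMeasurable
        (Integrable.ae_convolution_exists mulL hψi hKbi)
        (Integrable.ae_convolution_exists mulL hKbi.norm hkbi.norm)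
        ht
    -- the final witness
    set Kf : ℝ → ℝ := fun x => Kb x + (ψ ⋆[mulL] Kb) x with hKf_def
    have hKfi : Integrable Kf := hKbi.add (hψi.integrable_convolution mulL hKbi)
    refine ⟨Kf, hKfi.integrableOn, ?_⟩
    filter_upwards [ae2, hassoc, Integrable.ae_convolution_exists mulL hKbi hkbi,
      Integrable.ae_convolution_exists mulL (hψi.integrable_convolution mulL hKbi) hkbi]
      with t h2 h3 h4 h5 ht
    -- Step A : interval integral as a convolution
    have hstepA : (∫ s in (0:ℝ)..t, Kf (t - s) * k s) = (Kf ⋆[mulL] kb) t := by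
      rw [conv_flip_apply]
      have hpt : (fun s => Kf (t - s) * kb s)
          = (Ioo (0:ℝ) t).indicator (fun s => Kf (t - s) * k s) := by
        funext s
        by_cases hs : s ∈ Ioo (0:ℝ) t
        · rw [indicator_of_mem hs, hkb_def,
            indicator_of_mem (show s ∈ Ioo (0:ℝ) b from ⟨hs.1, by linarith [ht.2, hs.2]⟩)]
        · rw [indicator_of_notMem hs]
          by_cases hs2 : s ∈ Ioo (0:ℝ) b
          · have h6 : t - s ≤ 0 := by
              by_contra h
              exact hs ⟨hs2.1, by linarith [lt_of_not_ge h]⟩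
            have h7 : Kf (t - s) = 0 := by
              rw [hKf_def]
              simp only
              rw [hconvKbz _ h6, hKb_def, indicator_of_notMem
                (fun hm => absurd hm.1 (not_lt.mpr h6)), add_zero]
            rw [h7, zero_mul]
          · rw [hkb_def, indicator_of_notMem hs2, mul_zero]
      rw [hpt, MeasureTheory.integral_indicator measurableSet_Ioo,
        ← integral_Ioc_eq_integral_Ioo, ← intervalIntegral.integral_of_le ht.1.le]
    -- Step B : splitting the convolution
    have hstepB : (Kf ⋆[mulL] kb) t
        = (Kb ⋆[mulL] kb) t + ((ψ ⋆[mulL] Kb) ⋆[mulL] kb) t := by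
      have h4' : Integrable (fun s => Kb s * kb (t - s)) := by
        have := h4.integrable
        simpa [ContinuousLinearMap.mul_apply'] using this
      have h5' : Integrable (fun s => (ψ ⋆[mulL] Kb) s * kb (t - s)) := by
        have := h5.integrable
        simpa [ContinuousLinearMap.mul_apply'] using this
      rw [conv_apply Kf kb t, conv_apply Kb kb t, conv_apply (ψ ⋆[mulL] Kb) kb t]
      rw [show (fun s => Kf s * kb (t - s))
          = fun s => Kb s * kb (t - s) + (ψ ⋆[mulL] Kb) s * kb (t - s) from
          funext fun s => by rw [hKf_def]; ring]
      exact integral_add h4' h5'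
    -- Step E : rewriting with the indicator decomposition
    set I1 : ℝ → ℝ := (Ioo (0:ℝ) b).indicator (fun _ => (1:ℝ)) with hI1_def
    set IΦ : ℝ → ℝ := (Ioo (0:ℝ) b).indicator Φ with hIΦ_def
    have hI1m : Measurable I1 := measurable_const.indicator measurableSet_Ioo
    have hIΦm : Measurable IΦ := hΦcont.measurable.indicator measurableSet_Ioo
    have hstepE : (ψ ⋆[mulL] q) t = ∫ s, ψ s * (I1 (t - s) + IΦ (t - s)) := by
      rw [conv_apply]
      refine integral_congr_ae (Eventually.of_forall fun s => ?_)
      beta_reduce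
      by_cases hψs : ψ s = 0
      · rw [hψs, zero_mul, zero_mul]
      · have hs' : s ∈ Ioo (0:ℝ) b := hψsupp (mem_support.mpr hψs)
        congr 1
        by_cases h0 : (0:ℝ) < t - s
        · have hmem : t - s ∈ Ioo (0:ℝ) b := ⟨h0, by linarith [hs'.1, ht.2]⟩
          rw [hq_def]
          simp only [if_pos hmem]
          rw [hI1_def, hIΦ_def, indicator_of_mem hmem, indicator_of_mem hmem]
          exact hgΦ _ hmem
        · have hle : t - s ≤ 0 := not_lt.mp h0
          have hnm : t - s ∉ Ioo (0:ℝ) b := fun hm => absurd hm.1 (not_lt.mpr hle)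
          rw [hq_def]
          simp only [if_neg hnm]
          rw [hKbkbz _ hle, hI1_def, hIΦ_def,
            indicator_of_notMem hnm, indicator_of_notMem hnm, add_zero]
    -- integrability of the two pieces
    have hmul1 : Integrable (fun s => ψ s * I1 (t - s)) := by
      have hm : Measurable fun s : ℝ => I1 (t - s) :=
        hI1m.comp (measurable_const.sub measurable_id)
      refine hψi.norm.mono' (hψi.aestronglyMeasurable.mul hm.aestronglyMeasurable) ?_
      refine Eventually.of_forall fun s => ?_
      beta_reduce
      rw [norm_mul]
      have : ‖I1 (t - s)‖ ≤ 1 := by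
        rw [hI1_def]
        by_cases hm2 : t - s ∈ Ioo (0:ℝ) b
        · rw [indicator_of_mem hm2]; norm_num
        · rw [indicator_of_notMem hm2]; norm_num
      exact mul_le_of_le_one_right (norm_nonneg _) this
    have hmul2 : Integrable (fun s => ψ s * IΦ (t - s)) := by
      have hm : Measurable fun s : ℝ => IΦ (t - s) :=
        hIΦm.comp (measurable_const.sub measurable_id)
      refine (hψi.norm.const_mul M).mono'
        (hψi.aestronglyMeasurable.mul hm.aestronglyMeasurable) ?_
      refine Eventually.of_forall fun s => ?_
      beta_reduce
      rw [norm_mul]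
      have hb1 : ‖IΦ (t - s)‖ ≤ M := by
        rw [hIΦ_def]
        exact le_trans (norm_indicator_le_norm_self Φ _) (hΦbd _)
      have hMnn : 0 ≤ M := le_trans (norm_nonneg _) (hΦbd 0)
      calc ‖ψ s‖ * ‖IΦ (t - s)‖ ≤ ‖ψ s‖ * M :=
            mul_le_mul_of_nonneg_left hb1 (norm_nonneg _)
      _ = M * ‖ψ s‖ := mul_comm _ _
    have hstepF : (∫ s, ψ s * (I1 (t - s) + IΦ (t - s)))
        = (∫ s, ψ s * I1 (t - s)) + ∫ s, ψ s * IΦ (t - s) := by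
      rw [show (fun s => ψ s * (I1 (t - s) + IΦ (t - s)))
          = fun s => ψ s * I1 (t - s) + ψ s * IΦ (t - s) from
          funext fun s => by ring]
      exact integral_add hmul1 hmul2
    -- Step G : the first piece
    have hstepG : (∫ s, ψ s * I1 (t - s)) = ∫ s in Ioo 0 t, ψ s := by
      rw [← MeasureTheory.integral_indicator measurableSet_Ioo]
      refine integral_congr_ae (Eventually.of_forall fun s => ?_)
      beta_reduce
      by_cases hψs : ψ s = 0
      · by_cases hs : s ∈ Ioo (0:ℝ) t
        · rw [indicator_of_mem hs, hψs, zero_mul]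
        · rw [indicator_of_notMem hs, hψs, zero_mul]
      · have hs' : s ∈ Ioo (0:ℝ) b := hψsupp (mem_support.mpr hψs)
        by_cases hs : s ∈ Ioo (0:ℝ) t
        · rw [indicator_of_mem hs, hI1_def,
            indicator_of_mem (show t - s ∈ Ioo (0:ℝ) b from
              ⟨by linarith [hs.2], by linarith [hs.1, ht.2]⟩), mul_one]
        · have h6 : t - s ≤ 0 := by
            by_contra h
            exact hs ⟨hs'.1, by linarith [lt_of_not_ge h]⟩
          rw [indicator_of_notMem hs, hI1_def,
            indicator_of_notMem (fun hm => absurd hm.1 (not_lt.mpr h6)), mul_zero]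
    -- Step H : the second piece
    have hstepH : (∫ s, ψ s * IΦ (t - s)) = ∫ s, ψ s * Φ (t - s) := by
      refine integral_congr_ae (Eventually.of_forall fun s => ?_)
      beta_reduce
      by_cases hψs : ψ s = 0
      · rw [hψs, zero_mul, zero_mul]
      · have hs' : s ∈ Ioo (0:ℝ) b := hψsupp (mem_support.mpr hψs)
        congr 1
        by_cases h0 : (0:ℝ) < t - s
        · rw [hIΦ_def, indicator_of_mem (show t - s ∈ Ioo (0:ℝ) b from
            ⟨h0, by linarith [hs'.1, ht.2]⟩)]
        · have hle : t - s ≤ 0 := not_lt.mp h0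
          rw [hIΦ_def, indicator_of_notMem (fun hm => absurd hm.1 (not_lt.mpr hle)),
            hΦ0 _ hle]
    -- Step I : resolvent identity integrated over (0,t)
    have hstepI : (∫ s in Ioo 0 t, ψ s)
        = -Φ t - ∫ s in Ioo 0 t, (fd ⋆[mulL] ψ) s := by
      have hsub : Ioo (0:ℝ) t ⊆ Ioo 0 b := Ioo_subset_Ioo le_rfl ht.2.le
      have h7 : ∀ᵐ s ∂(volume.restrict (Ioo 0 t)),
          ψ s = -fd s - (fd ⋆[mulL] ψ) s := by
        refine (ae_restrict_iff' measurableSet_Ioo).mpr ?_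
        filter_upwards [hres] with s hs hst
        have := hs (hsub hst)
        linarith
      calc (∫ s in Ioo 0 t, ψ s)
          = ∫ s in Ioo 0 t, (-fd s - (fd ⋆[mulL] ψ) s) := integral_congr_ae h7
      _ = (∫ s in Ioo 0 t, -fd s) - ∫ s in Ioo 0 t, (fd ⋆[mulL] ψ) s :=
          integral_sub hfdi.neg.integrableOn
            ((hfdi.integrable_convolution mulL hψi).integrableOn)
      _ = -Φ t - ∫ s in Ioo 0 t, (fd ⋆[mulL] ψ) s := by
          rw [MeasureTheory.integral_neg, ← hΦIoo t]
    -- assemble everything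
    have hfinal : ∫ s, ψ s * Φ (t - s) = ∫ v, ψ v * Φ (t - v) := rfl
    rw [hstepA, hstepB, h2 ht, h3, hconv_q, hstepE, hstepF, hstepG, hstepH, hstepI,
      hC t ht, hgΦ t ht]
    ring
end
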